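/- arXiv:2408.17444 — 6 statements merged into one kernel-verified Lean document; each statement's English description precedes it below -/
import Mathlib

section
/- Let n ∈ ℕ and m ∈ {0,…,2n}. Let A ⊆ ℝ^{2n} be countably m-rectifiable and let B ⊆ ℝ^{2n} be (2n−m)-negligible. Then there exists a vector v₀ ∈ ℝ^{2n} such that for Lebesgue-almost every t ∈ ℝ one has (A + t·v₀) ∩ B = ∅; that is, the set {t ∈ ℝ : ∃ a ∈ A, a + t·v₀ ∈ B} has one-dimensional Lebesgue measure zero. -/
open Set MeasureTheory

/-- A subset `A` of a metric space is countably `m`-rectifiable iff it is the union of the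
images of countably many Lipschitz maps, each defined on some subset of `ℝ^m`. -/
def CountablyRectifiable (m : ℕ) {X : Type*} [MetricSpace X] (A : Set X) : Prop :=
  ∃ (S : ℕ → Set (EuclideanSpace ℝ (Fin m))) (f : ∀ i, S i → X) (C : ℕ → NNReal),
    (∀ i, LipschitzWith (C i) (f i)) ∧ A = ⋃ i, Set.range (f i)

/-!
If `a ∈ A` and `a + τ • v₀ ∈ B`, then `τ • v₀ ∈ B - A`; so it suffices that `B - A` is
Lebesgue-null, since then, by Fubini for `(τ, v) ↦ τ • v`, almost every line `ℝ • v₀` meets it in a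
null set of parameters. For each Lipschitz piece `f : S → ℝ^{2n}` of `A`, `B - range f` is the
image of `S × B` under the Lipschitz map `(s, b) ↦ b - f s`, and `ℝ^m × B` is `(m + t)`-negligible
when `B` is `t`-negligible: cover `B` by small sets `E j` and a ball of `ℝ^m` by about
`diam (E j) ^ (-m)` cubes of side `diam (E j)`; the products `cube ×ˢ E j` have `(m + t)`-sum
comparable to the `t`-sum of the `E j`. With `t = 2n - m`, a `2n`-negligible subset of `ℝ^{2n}` is
Lebesgue-null.
-/

open Metric Filter Module
open scoped ENNReal NNReal Pointwise Topology

lemma floor_div_mem_Icc_ceil {R r x : ℝ} (hr : 0 < r) (hx : |x| ≤ R) :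
    ⌊x / r⌋ ∈ Finset.Icc (-⌈R / r⌉) ⌈R / r⌉ := by
  have hxr : |x / r| ≤ R / r := by rw [abs_div, abs_of_pos hr]; gcongr
  rw [Finset.mem_Icc, ← Int.floor_neg]
  exact ⟨Int.floor_mono (neg_le_of_abs_le hxr),
    (Int.floor_mono (le_of_abs_le hxr)).trans (Int.floor_le_ceil _)⟩

lemma exists_finset_cover_closedBall_pi (m : ℕ) {R r : ℝ} (hR : 0 ≤ R) (hr : 0 < r) :
    ∃ c : Finset (Set (Fin m → ℝ)), closedBall 0 R ⊆ ⋃ s ∈ c, s ∧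
      (∀ s ∈ c, ediam s ≤ ENNReal.ofReal r) ∧ (c.card : ℝ) * r ^ m ≤ (2 * R + 3 * r) ^ m := by
  classical
  set K := ⌈R / r⌉
  let cube (κ : Fin m → ℤ) : Set (Fin m → ℝ) := pi univ fun i => Icc (κ i * r) (κ i * r + r)
  refine ⟨(Fintype.piFinset fun _ => Finset.Icc (-K) K).image cube, ?_, ?_, ?_⟩
  · intro x hx
    have hxi (i : Fin m) : |x i| ≤ R := by
      simpa using (mem_closedBall_zero_iff.1 hx).trans' (norm_le_pi_norm x i)
    refine mem_biUnion (Finset.mem_image_of_mem cube (?_ : (fun i => ⌊x i / r⌋) ∈ _))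
      fun i _ => ⟨?_, ?_⟩
    · exact Fintype.mem_piFinset.2 fun i => floor_div_mem_Icc_ceil hr (hxi i)
    · exact (le_div_iff₀ hr).1 (Int.floor_le _)
    · have := (div_lt_iff₀ hr).1 (Int.lt_floor_add_one (x i / r))
      linarith
  · simp only [Finset.mem_image, forall_exists_index, and_imp]
    rintro _ κ - rfl
    exact ediam_pi_le_of_le fun i => by rw [Real.ediam_Icc, add_sub_cancel_left]
  · have hK : (K : ℝ) ≤ R / r + 1 := (Int.ceil_lt_add_one _).le
    calc ((Finset.image cube _).card : ℝ) * r ^ m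
        ≤ ((2 * K + 1) * r) ^ m := by
          rw [mul_pow]
          gcongr
          refine (Nat.cast_le.2 Finset.card_image_le).trans_eq ?_
          have hK0 : 0 ≤ K := Int.ceil_nonneg (div_nonneg hR hr.le)
          rw [Fintype.card_piFinset_const, Int.card_Icc, Nat.cast_pow, ← Int.cast_natCast,
            Int.toNat_of_nonneg (by omega)]
          push_cast
          ring
      _ ≤ (2 * R + 3 * r) ^ m := by
          gcongr
          calc (2 * (K : ℝ) + 1) * r ≤ (2 * (R / r + 1) + 1) * r := by gcongr
            _ = 2 * R + 3 * r := by field_simp; ring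

lemma exists_finset_cover_closedBall_pi_of_le_one (m : ℕ) {R : ℝ} (hR : 0 ≤ R) {r : ℝ≥0∞}
    (hr : 0 < r) (hr₁ : r ≤ 1) :
    ∃ c : Finset (Set (Fin m → ℝ)), closedBall 0 R ⊆ ⋃ s ∈ c, s ∧ (∀ s ∈ c, ediam s ≤ r) ∧
      (c.card : ℝ≥0∞) * r ^ m ≤ ENNReal.ofReal ((2 * R + 3) ^ m) := by
  have hr_top : r ≠ ⊤ := (hr₁.trans_lt ENNReal.one_lt_top).ne
  have hr₁' : r.toReal ≤ 1 := ENNReal.toReal_le_of_le_ofReal zero_le_one (by simpa using hr₁)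
  obtain ⟨c, hcov, hdiam, hcard⟩ :=
    exists_finset_cover_closedBall_pi m hR (ENNReal.toReal_pos hr.ne' hr_top)
  refine ⟨c, hcov, by simpa [ENNReal.ofReal_toReal hr_top] using hdiam, ?_⟩
  rw [← ENNReal.ofReal_toReal hr_top, ← ENNReal.ofReal_pow ENNReal.toReal_nonneg,
    ← ENNReal.ofReal_natCast, ← ENNReal.ofReal_mul (Nat.cast_nonneg _)]
  exact ENNReal.ofReal_le_ofReal (hcard.trans (by gcongr; linarith))

lemma ediam_prod_le {X Y : Type*} [PseudoEMetricSpace X] [PseudoEMetricSpace Y]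
    (s : Set X) (t : Set Y) : ediam (s ×ˢ t) ≤ max (ediam s) (ediam t) :=
  ediam_le fun p hp q hq => (Prod.edist_eq p q).trans_le <|
    max_le_max (edist_le_ediam_of_mem hp.1 hq.1) (edist_le_ediam_of_mem hp.2 hq.2)

section HausdorffNull

variable {Y : Type*} [EMetricSpace Y] [MeasurableSpace Y] [BorelSpace Y] {t : ℝ} {B : Set Y}

lemma exists_cover_tsum_ediam_rpow_le (ht : 0 < t) (hB : μH[t] B = 0) {δ ε : ℝ≥0∞}
    (hδ : 0 < δ) (hε : 0 < ε) :
    ∃ E : ℕ → Set Y, B ⊆ ⋃ j, E j ∧ (∀ j, ediam (E j) ≤ δ) ∧ ∑' j, ediam (E j) ^ t ≤ ε := by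
  have h : (⨅ (E : ℕ → Set Y) (_ : B ⊆ ⋃ j, E j) (_ : ∀ j, ediam (E j) ≤ δ),
      ∑' j, ⨆ _ : (E j).Nonempty, ediam (E j) ^ t) < ε :=
    (le_iSup₂ (f := fun r _ => ⨅ (E : ℕ → Set Y) (_ : B ⊆ ⋃ j, E j)
      (_ : ∀ j, ediam (E j) ≤ r), ∑' j, ⨆ _ : (E j).Nonempty, ediam (E j) ^ t) δ hδ).trans_lt
      (by rwa [← Measure.hausdorffMeasure_apply, hB])
  simp only [iInf_lt_iff] at h
  obtain ⟨E, hcov, hdiam, hsum⟩ := h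
  refine ⟨E, hcov, hdiam, (ENNReal.tsum_le_tsum fun j => ?_).trans hsum.le⟩
  rcases (E j).eq_empty_or_nonempty with hE | hE
  · simp [hE, ENNReal.zero_rpow_of_pos ht]
  · exact le_iSup_of_le hE le_rfl

/-- The radii `s j` bound the diameters from above but stay positive, so that cubes of side
`s j` can be used even where `E j` is a single point. -/
lemma exists_cover_pos_radii (ht : 0 < t) (hB : μH[t] B = 0) {δ ε : ℝ≥0∞}
    (hδ : 0 < δ) (hε : 0 < ε) :
    ∃ (E : ℕ → Set Y) (s : ℕ → ℝ≥0∞), B ⊆ ⋃ j, E j ∧ (∀ j, ediam (E j) ≤ s j) ∧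
      (∀ j, 0 < s j ∧ s j ≤ δ) ∧ ∑' j, s j ^ t ≤ ε := by
  have hε₂ : 0 < ε / 2 := ENNReal.half_pos hε.ne'
  obtain ⟨E, hcov, hdiam, hsum⟩ := exists_cover_tsum_ediam_rpow_le ht hB hδ hε₂
  obtain ⟨η, hη, hηsum⟩ := ENNReal.exists_pos_sum_of_countable hε₂.ne' ℕ
  refine ⟨E, fun j => max (ediam (E j)) (min δ ((η j : ℝ≥0∞) ^ t⁻¹)), hcov,
    fun j => le_max_left _ _, fun j => ⟨?_, max_le (hdiam j) (min_le_left _ _)⟩, ?_⟩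
  · exact lt_max_of_lt_right
      (lt_min hδ (ENNReal.rpow_pos (ENNReal.coe_pos.2 (hη j)) ENNReal.coe_ne_top))
  calc ∑' j, max (ediam (E j)) (min δ ((η j : ℝ≥0∞) ^ t⁻¹)) ^ t
      ≤ ∑' j, (ediam (E j) ^ t + η j) := ENNReal.tsum_le_tsum fun j => by
        rw [ENNReal.max_rpow ht.le]
        refine max_le le_self_add (le_add_left ?_)
        calc min δ ((η j : ℝ≥0∞) ^ t⁻¹) ^ t ≤ ((η j : ℝ≥0∞) ^ t⁻¹) ^ t := by
              gcongr; exact min_le_right _ _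
          _ = η j := ENNReal.rpow_inv_rpow ht.ne' _
    _ = ∑' j, ediam (E j) ^ t + ∑' j, (η j : ℝ≥0∞) := ENNReal.tsum_add
    _ ≤ ε / 2 + ε / 2 := add_le_add hsum hηsum.le
    _ = ε := ENNReal.add_halves ε

lemma exists_cover_closedBall_prod (m : ℕ) (ht : 0 < t) (hB : μH[t] B = 0) {R : ℝ} (hR : 0 ≤ R)
    {δ ε : ℝ≥0∞} (hδ : 0 < δ) (hδ₁ : δ ≤ 1) (hε : 0 < ε) :
    ∃ (ι : Type) (_ : Countable ι) (U : ι → Set ((Fin m → ℝ) × Y)),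
      closedBall 0 R ×ˢ B ⊆ ⋃ i, U i ∧ (∀ i, ediam (U i) ≤ δ) ∧
      ∑' i, ediam (U i) ^ ((m : ℝ) + t) ≤ ENNReal.ofReal ((2 * R + 3) ^ m) * ε := by
  obtain ⟨E, s, hcov, hdiamE, hs, hsum⟩ := exists_cover_pos_radii ht hB hδ hε
  choose c hc_cov hc_diam hcard using fun j =>
    exists_finset_cover_closedBall_pi_of_le_one m hR (hs j).1 ((hs j).2.trans hδ₁)
  have hdiam (j : ℕ) (q : Set (Fin m → ℝ)) (hq : q ∈ c j) : ediam (q ×ˢ E j) ≤ s j :=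
    (ediam_prod_le _ _).trans (max_le (hc_diam j q hq) (hdiamE j))
  refine ⟨Σ j, c j, inferInstance, fun q => q.2.1 ×ˢ E q.1, ?_, ?_, ?_⟩
  · rintro ⟨x, y⟩ ⟨hx, hy⟩
    obtain ⟨j, hj⟩ := mem_iUnion.1 (hcov hy)
    obtain ⟨q, hq, hxq⟩ := mem_iUnion₂.1 (hc_cov j hx)
    exact mem_iUnion.2 ⟨⟨j, q, hq⟩, hxq, hj⟩
  · rintro ⟨j, q, hq⟩
    exact (hdiam j q hq).trans (hs j).2
  calc ∑' q : Σ j, c j, ediam (q.2.1 ×ˢ E q.1) ^ ((m : ℝ) + t)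
      = ∑' j, ∑' q : c j, ediam (q.1 ×ˢ E j) ^ ((m : ℝ) + t) := ENNReal.tsum_sigma' _
    _ ≤ ∑' j, ((c j).card : ℝ≥0∞) * s j ^ ((m : ℝ) + t) := ENNReal.tsum_le_tsum fun j => by
        rw [Finset.tsum_subtype (c j) fun q => ediam (q ×ˢ E j) ^ ((m : ℝ) + t), ← nsmul_eq_mul]
        exact Finset.sum_le_card_nsmul _ _ _ fun q hq => by gcongr; exact hdiam j q hq
    _ ≤ ∑' j, ENNReal.ofReal ((2 * R + 3) ^ m) * s j ^ t := ENNReal.tsum_le_tsum fun j => by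
        rw [ENNReal.rpow_add_of_nonneg _ _ (Nat.cast_nonneg m) ht.le, ENNReal.rpow_natCast,
          ← mul_assoc]
        gcongr
        exact hcard j
    _ ≤ ENNReal.ofReal ((2 * R + 3) ^ m) * ε := by
        rw [ENNReal.tsum_mul_left]
        gcongr

lemma hausdorffMeasure_closedBall_prod_eq_zero (m : ℕ) (ht : 0 < t) (hB : μH[t] B = 0) {R : ℝ}
    (hR : 0 ≤ R) : μH[(m : ℝ) + t] (closedBall (0 : Fin m → ℝ) R ×ˢ B) = 0 := by
  set r : ℕ → ℝ≥0∞ := fun n => ((n + 1 : ℕ) : ℝ≥0∞)⁻¹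
  have hr (n : ℕ) : 0 < r n := ENNReal.inv_pos.2 (ENNReal.natCast_ne_top _)
  have hr₁ (n : ℕ) : r n ≤ 1 := ENNReal.inv_le_one.2 (Nat.one_le_cast.2 n.succ_pos)
  have hr_lim : Tendsto r atTop (𝓝 0) :=
    (tendsto_add_atTop_iff_nat 1).2 ENNReal.tendsto_inv_nat_nhds_zero
  choose ι _ U hcov hdiam hsum using fun n =>
    exists_cover_closedBall_prod m ht hB hR (hr n) (hr₁ n) (hr n)
  refine le_antisymm ?_ zero_le
  calc μH[(m : ℝ) + t] (closedBall (0 : Fin m → ℝ) R ×ˢ B)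
      ≤ liminf (fun n => ∑' i, ediam (U n i) ^ ((m : ℝ) + t)) atTop :=
        Measure.hausdorffMeasure_le_liminf_tsum _ _ r hr_lim U (.of_forall hdiam) (.of_forall hcov)
    _ ≤ liminf (fun n => ENNReal.ofReal ((2 * R + 3) ^ m) * r n) atTop :=
        liminf_le_liminf (.of_forall hsum)
    _ = 0 := by
        simpa using (ENNReal.Tendsto.const_mul hr_lim (.inr ENNReal.ofReal_ne_top)).liminf_eq

lemma hausdorffMeasure_univ_prod_eq_zero {V : Type*} [NormedAddCommGroup V] [NormedSpace ℝ V]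
    [FiniteDimensional ℝ V] [MeasurableSpace V] [BorelSpace V] (ht : 0 ≤ t) (hB : μH[t] B = 0) :
    μH[(finrank ℝ V : ℝ) + t] (univ ×ˢ B : Set (V × Y)) = 0 := by
  rcases ht.eq_or_lt with rfl | ht
  · have hB' : B = ∅ := not_nonempty_iff_eq_empty.1 fun hne =>
      by simpa [hB] using Measure.one_le_hausdorffMeasure_zero_of_nonempty hne
    simp [hB']
  let e : (Fin (finrank ℝ V) → ℝ) ≃L[ℝ] V := .ofFinrankEq (by simp)
  obtain ⟨K, he⟩ : ∃ K, LipschitzWith K (Prod.map e (id : Y → Y)) :=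
    ⟨_, (e.lipschitz.comp LipschitzWith.prod_fst).prodMk LipschitzWith.prod_snd⟩
  have hcover : (univ ×ˢ B : Set (V × Y)) =
      Prod.map e id '' ⋃ p : ℕ, closedBall (0 : Fin (finrank ℝ V) → ℝ) p ×ˢ B := by
    rw [← iUnion_prod_const, iUnion_closedBall_nat, prodMap_image_prod,
      image_univ_of_surjective e.surjective, image_id]
  rw [hcover]
  refine le_antisymm ((he.hausdorffMeasure_image_le (by positivity) _).trans ?_) zero_le
  rw [measure_iUnion_null fun p =>
    hausdorffMeasure_closedBall_prod_eq_zero _ ht hB (Nat.cast_nonneg p), mul_zero]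

end HausdorffNull

lemma hausdorffMeasure_sub_range_eq_zero {V E : Type*} [NormedAddCommGroup V] [NormedSpace ℝ V]
    [FiniteDimensional ℝ V] [MeasurableSpace V] [BorelSpace V]
    [NormedAddCommGroup E] [MeasurableSpace E] [BorelSpace E] {t : ℝ} (ht : 0 ≤ t)
    {B : Set E} (hB : μH[t] B = 0) {S : Set V} {f : S → E} {C : ℝ≥0} (hf : LipschitzWith C f) :
    μH[(finrank ℝ V : ℝ) + t] (B - range f) = 0 := by
  have hd : 0 ≤ (finrank ℝ V : ℝ) + t := by positivity
  have hSB : μH[(finrank ℝ V : ℝ) + t] (univ ×ˢ B : Set (S × E)) = 0 := by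
    rw [← (isometry_subtype_coe.prodMap isometry_id).hausdorffMeasure_image (.inl hd)]
    refine measure_mono_null ?_ (hausdorffMeasure_univ_prod_eq_zero ht hB)
    rw [prodMap_image_prod, image_id]
    exact prod_mono (subset_univ _) subset_rfl
  have hg : LipschitzWith (1 + C) fun p : S × E => p.2 - f p.1 := by
    simpa using LipschitzWith.prod_snd.sub (hf.comp LipschitzWith.prod_fst)
  have himage : B - range f = (fun p : S × E => p.2 - f p.1) '' (univ ×ˢ B) := by
    ext x
    constructor
    · rintro ⟨b, hb, _, ⟨s, rfl⟩, rfl⟩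
      exact ⟨(s, b), ⟨trivial, hb⟩, rfl⟩
    · rintro ⟨⟨s, b⟩, ⟨-, hb⟩, rfl⟩
      exact ⟨b, hb, f s, mem_range_self s, rfl⟩
  rw [himage]
  exact le_antisymm ((hg.hausdorffMeasure_image_le hd _).trans_eq (by rw [hSB, mul_zero]))
    zero_le

lemma volume_eq_zero_of_hausdorffMeasure_eq_zero {V : Type*} [NormedAddCommGroup V]
    [InnerProductSpace ℝ V] [FiniteDimensional ℝ V] [MeasurableSpace V] [BorelSpace V]
    {s : Set V} (hs : μH[finrank ℝ V] s = 0) : volume s = 0 := by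
  rw [← InnerProductSpace.euclideanHausdorffMeasure_eq_volume,
    Measure.euclideanHausdorffMeasure_def, Measure.smul_apply, hs, smul_zero]

lemma ae_volume_smul_preimage_eq_zero {V : Type*} [NormedAddCommGroup V] [NormedSpace ℝ V]
    [FiniteDimensional ℝ V] [MeasurableSpace V] [BorelSpace V] (μ : Measure V)
    [μ.IsAddHaarMeasure] {D : Set V} (hD : μ D = 0) :
    ∀ᵐ v ∂μ, volume {τ : ℝ | τ • v ∈ D} = 0 := by
  obtain ⟨D', hDD', hD'_meas, hD'⟩ := exists_measurable_superset_of_null hD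
  have hslices : ∀ᵐ τ : ℝ, ∀ᵐ v ∂μ, τ • v ∉ D' := by
    filter_upwards [compl_mem_ae_iff.2 (measure_singleton (0 : ℝ))] with τ hτ
    rw [ae_iff]
    simp only [not_not]
    exact (Measure.addHaar_preimage_smul μ hτ D').trans (by rw [hD', mul_zero])
  filter_upwards [(Measure.ae_ae_comm
    ((measurable_fst.smul measurable_snd) hD'_meas).compl).1 hslices] with v hv
  exact measure_mono_null (t := {τ : ℝ | τ • v ∈ D'}) (fun τ hτ => hDD' hτ)
    (by simpa using ae_iff.1 hv)

/-- **Instantaneous Hamiltonian displaceability of small sets.**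
If `A ⊆ ℝ^{2n}` is countably `m`-rectifiable and `B ⊆ ℝ^{2n}` is `(2n-m)`-negligible
(its `(2n-m)`-dimensional Hausdorff measure vanishes), then there is a vector `v₀`
such that for almost every `t ∈ ℝ` the translate `A + t • v₀` is disjoint from `B`. -/
theorem instantaneous_displaceability (n m : ℕ) (hm : m ≤ 2 * n)
    (A B : Set (EuclideanSpace ℝ (Fin (2 * n))))
    (hA : CountablyRectifiable m A)
    (hB : μH[((2 * n - m : ℕ) : ℝ)] B = 0) :
    ∃ v₀ : EuclideanSpace ℝ (Fin (2 * n)),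
      volume {t : ℝ | ∃ a ∈ A, a + t • v₀ ∈ B} = 0 := by
  obtain ⟨S, f, C, hf, rfl⟩ := hA
  have hdim : ((m : ℕ) : ℝ) + ((2 * n - m : ℕ) : ℝ) =
      finrank ℝ (EuclideanSpace ℝ (Fin (2 * n))) := by
    rw [finrank_euclideanSpace_fin, ← Nat.cast_add, Nat.add_sub_cancel' hm]
  have hD : volume (B - ⋃ i, range (f i)) = 0 := by
    refine volume_eq_zero_of_hausdorffMeasure_eq_zero ?_
    rw [sub_iUnion, ← hdim]
    refine measure_iUnion_null fun i => ?_
    simpa using hausdorffMeasure_sub_range_eq_zero (Nat.cast_nonneg _) hB (hf i)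
  obtain ⟨v₀, hv₀⟩ := (ae_volume_smul_preimage_eq_zero volume hD).exists
  refine ⟨v₀, measure_mono_null ?_ hv₀⟩
  rintro t ⟨a, ha, hat⟩
  exact ⟨_, hat, a, ha, add_sub_cancel_left a _⟩
end

section
/- Let ℓ ∈ ℕ and m ∈ {0,…,ℓ}. Let A ⊆ ℝ^ℓ be countably m-rectifiable and let B ⊆ ℝ^ℓ be (ℓ−m)-negligible. Then there exists a vector v₀ ∈ ℝ^ℓ such that the set {t ∈ ℝ : (A + t·v₀) ∩ B ≠ ∅} has one-dimensional Lebesgue measure zero. -/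
/-!
`B - A` is Lebesgue-null. Restrict a Lipschitz piece `f : S → ℝ^ℓ` of `A` to a ball of
radius `R`: a grid of mesh `d` cuts that ball into `≲ (R / d)^m` cells, so for a set `E` of
diameter `d` the set `E - f(S ∩ ball)` lies in `≲ d^(-m)` sets of diameter `≲ d`, of total
volume `≲ d^(ℓ - m)`. Summing over a cover of `B` witnessing `μH[ℓ - m] B = 0` gives the claim.

Since `(A + t • v) ∩ B ≠ ∅` iff `t • v ∈ B - A`, it remains to find `v` with
`{t | t • v ∈ B - A}` null; by Fubini and the scaling of Lebesgue measure this holds for a.e. `v`.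
-/

open Set MeasureTheory

open Filter Topology Metric
open scoped ENNReal NNReal Pointwise

section Grid

variable {m : ℕ}

def gridCell (d : ℝ) (z : Fin m → ℤ) : Set (EuclideanSpace ℝ (Fin m)) :=
  {x | ∀ k, ⌊x k / d⌋ = z k}

lemma dist_le_of_mem_gridCell {d : ℝ} (hd : 0 < d) {z : Fin m → ℤ}
    {x y : EuclideanSpace ℝ (Fin m)} (hx : x ∈ gridCell d z) (hy : y ∈ gridCell d z) :
    dist x y ≤ √m * d := by
  have hcoord : ∀ k, dist (x k) (y k) ≤ d := fun k => by
    obtain ⟨hx₁, hx₂⟩ := Int.floor_eq_iff.1 (hx k)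
    obtain ⟨hy₁, hy₂⟩ := Int.floor_eq_iff.1 (hy k)
    rw [le_div_iff₀ hd] at hx₁ hy₁
    rw [div_lt_iff₀ hd] at hx₂ hy₂
    rw [Real.dist_eq, abs_le]
    constructor <;> linarith
  calc dist x y = √(∑ k, dist (x k) (y k) ^ 2) := EuclideanSpace.dist_eq x y
    _ ≤ √(∑ _k : Fin m, d ^ 2) := by gcongr with k; exact hcoord k
    _ = √m * d := by simp [Real.sqrt_mul, hd.le]

lemma exists_finset_gridCell_cover {R d : ℝ} (hR : 0 ≤ R) (hd : 0 < d) (hd₁ : d ≤ 1) :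
    ∃ Z : Finset (Fin m → ℤ), (Z.card : ℝ) ≤ ((2 * R + 3) / d) ^ m ∧
      closedBall 0 R ⊆ ⋃ z ∈ Z, gridCell d z := by
  set M : ℕ := ⌈R / d⌉₊
  refine ⟨Fintype.piFinset fun _ => Finset.Icc (-(M : ℤ)) M, ?_, fun x hx => ?_⟩
  · have hcard : (Finset.Icc (-(M : ℤ)) M).card = 2 * M + 1 := by rw [Int.card_Icc]; omega
    have hM : (M : ℝ) < R / d + 1 := Nat.ceil_lt_add_one (by positivity)
    have h3 : 3 ≤ 3 / d := by rw [le_div_iff₀ hd]; linarith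
    rw [Fintype.card_piFinset, Finset.prod_const, hcard, Finset.card_univ, Fintype.card_fin]
    push_cast
    gcongr
    rw [add_div, mul_div_assoc]
    linarith
  · refine mem_biUnion (x := fun k => ⌊x k / d⌋) ?_ fun _ => rfl
    rw [Finset.mem_coe, Fintype.mem_piFinset]
    intro k
    have hxk := abs_le.1 ((PiLp.norm_apply_le x k).trans (mem_closedBall_zero_iff.1 hx))
    have hRM : R / d ≤ M := Nat.le_ceil _
    have hlo : -(R / d) ≤ x k / d := by rw [← neg_div]; gcongr; exact hxk.1
    have hhi : x k / d ≤ R / d := by gcongr; exact hxk.2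
    rw [Finset.mem_Icc]
    constructor
    · exact Int.le_floor.2 (by push_cast; linarith)
    · exact (Int.floor_mono (hhi.trans hRM)).trans_eq (Int.floor_natCast M)

end Grid

theorem MeasureTheory.Measure.addHaar_le_of_forall_dist_le {E : Type*} [NormedAddCommGroup E]
    [NormedSpace ℝ E] [MeasurableSpace E] [BorelSpace E] [FiniteDimensional ℝ E]
    (μ : Measure E) [μ.IsAddHaarMeasure] {s : Set E} {r : ℝ} (hr : 0 ≤ r)
    (hs : ∀ x ∈ s, ∀ y ∈ s, dist x y ≤ r) :
    μ s ≤ ENNReal.ofReal (r ^ Module.finrank ℝ E) * μ (ball 0 1) := by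
  rcases s.eq_empty_or_nonempty with rfl | ⟨x, hx⟩
  · simp
  calc μ s ≤ μ (closedBall x r) := measure_mono fun y hy => mem_closedBall.2 (hs y hy x hx)
    _ = _ := Measure.addHaar_closedBall μ x hr

namespace LipschitzWith

variable {m ℓ : ℕ} {S : Set (EuclideanSpace ℝ (Fin m))} {C : ℝ≥0}
  {f : S → EuclideanSpace ℝ (Fin ℓ)}

theorem volume_sub_image_le (hf : LipschitzWith C f) (hmℓ : m ≤ ℓ) {R d : ℝ} (hR : 0 ≤ R)
    (hd : 0 < d) (hd₁ : d ≤ 1) {E : Set (EuclideanSpace ℝ (Fin ℓ))}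
    (hE : ∀ b ∈ E, ∀ b' ∈ E, dist b b' ≤ d) :
    volume (E - f '' {x | ‖(x : EuclideanSpace ℝ (Fin m))‖ ≤ R}) ≤
      ENNReal.ofReal ((2 * R + 3) ^ m * (1 + C * √m) ^ ℓ) *
        volume (ball (0 : EuclideanSpace ℝ (Fin ℓ)) 1) * ENNReal.ofReal d ^ (ℓ - m) := by
  obtain ⟨Z, hZ, hcover⟩ := exists_finset_gridCell_cover (m := m) hR hd hd₁
  set c : ℝ := 1 + C * √m
  set piece : (Fin m → ℤ) → Set (EuclideanSpace ℝ (Fin ℓ)) :=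
    fun z => E - f '' {x | (x : EuclideanSpace ℝ (Fin m)) ∈ gridCell d z}
  have hsub : E - f '' {x | ‖(x : EuclideanSpace ℝ (Fin m))‖ ≤ R} ⊆ ⋃ z ∈ Z, piece z := by
    rintro _ ⟨b, hb, _, ⟨x, hx, rfl⟩, rfl⟩
    obtain ⟨z, hz, hxz⟩ := mem_iUnion₂.1 (hcover (mem_closedBall_zero_iff.2 hx))
    exact mem_biUnion hz ⟨b, hb, _, ⟨x, hxz, rfl⟩, rfl⟩
  have hpiece : ∀ z ∈ Z, volume (piece z) ≤
      ENNReal.ofReal ((c * d) ^ ℓ) * volume (ball (0 : EuclideanSpace ℝ (Fin ℓ)) 1) := by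
    intro z _
    refine (Measure.addHaar_le_of_forall_dist_le volume (r := c * d) (by positivity) ?_).trans_eq
      (by rw [finrank_euclideanSpace_fin])
    rintro _ ⟨b, hb, _, ⟨x, hx, rfl⟩, rfl⟩ _ ⟨b', hb', _, ⟨x', hx', rfl⟩, rfl⟩
    calc dist (b - f x) (b' - f x') ≤ dist b b' + dist (f x) (f x') := dist_sub_sub_le _ _ _ _
      _ ≤ d + C * (√m * d) := by
        gcongr
        · exact hE b hb b' hb'
        · exact (hf.dist_le_mul x x').trans (by gcongr; exact dist_le_of_mem_gridCell hd hx hx')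
      _ = c * d := by ring
  calc _ ≤ ∑ z ∈ Z, volume (piece z) := (measure_mono hsub).trans (measure_biUnion_finset_le Z _)
    _ ≤ Z.card • (ENNReal.ofReal ((c * d) ^ ℓ) * volume (ball (0 : EuclideanSpace ℝ (Fin ℓ)) 1)) :=
      Finset.sum_le_card_nsmul _ _ _ hpiece
    _ ≤ ENNReal.ofReal (((2 * R + 3) / d) ^ m) *
          (ENNReal.ofReal ((c * d) ^ ℓ) * volume (ball (0 : EuclideanSpace ℝ (Fin ℓ)) 1)) := by
      rw [nsmul_eq_mul, ← ENNReal.ofReal_natCast]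
      gcongr
    _ = _ := by
      rw [← ENNReal.ofReal_pow hd.le, ← mul_assoc, ← ENNReal.ofReal_mul (by positivity),
        mul_right_comm, ← ENNReal.ofReal_mul (by positivity), div_pow, mul_pow,
        pow_sub₀ d hd.ne' hmℓ]
      congr 2
      field_simp

theorem volume_sub_image_le_ediam_pow (hf : LipschitzWith C f) (hmℓ : m < ℓ) {R : ℝ}
    (hR : 0 ≤ R) {E : Set (EuclideanSpace ℝ (Fin ℓ))} (hE : ediam E ≤ 1) :
    volume (E - f '' {x | ‖(x : EuclideanSpace ℝ (Fin m))‖ ≤ R}) ≤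
      ENNReal.ofReal ((2 * R + 3) ^ m * (1 + C * √m) ^ ℓ) *
        volume (ball (0 : EuclideanSpace ℝ (Fin ℓ)) 1) * ediam E ^ (ℓ - m) := by
  set K := ENNReal.ofReal ((2 * R + 3) ^ m * (1 + C * √m) ^ ℓ) *
    volume (ball (0 : EuclideanSpace ℝ (Fin ℓ)) 1)
  have hK : K ≠ ∞ := ENNReal.mul_ne_top ENNReal.ofReal_ne_top measure_ball_lt_top.ne
  have hbound : ∀ d : ℝ, 0 < d → d ≤ 1 → ediam E ≤ ENNReal.ofReal d →
      volume (E - f '' {x | ‖(x : EuclideanSpace ℝ (Fin m))‖ ≤ R}) ≤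
        K * ENNReal.ofReal d ^ (ℓ - m) := fun d hd hd₁ hEd =>
    hf.volume_sub_image_le hmℓ.le hR hd hd₁ fun b hb b' hb' =>
      (edist_le_ofReal hd.le).1 ((edist_le_ediam_of_mem hb hb').trans hEd)
  rcases eq_or_ne (ediam E) 0 with h0 | h0
  · have hlim : Tendsto (fun d : ℝ => K * ENNReal.ofReal d ^ (ℓ - m)) (𝓝 0) (𝓝 0) := by
      have := ((ENNReal.continuous_pow (ℓ - m)).comp ENNReal.continuous_ofReal).tendsto 0
      simpa [Nat.sub_ne_zero_of_lt hmℓ] using ENNReal.Tendsto.const_mul this (Or.inr hK)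
    refine (ge_of_tendsto (hlim.mono_left (nhdsWithin_le_nhds (s := Ioi 0))) ?_).trans zero_le
    filter_upwards [Ioc_mem_nhdsGT zero_lt_one] with d ⟨hd, hd₁⟩
    exact hbound d hd hd₁ (h0 ▸ zero_le)
  · have hfin : ediam E ≠ ∞ := (hE.trans_lt ENNReal.one_lt_top).ne
    simpa [ENNReal.ofReal_toReal hfin] using hbound (ediam E).toReal
      (ENNReal.toReal_pos h0 hfin) (ENNReal.toReal_le_of_le_ofReal zero_le_one (by simpa using hE))
      (by rw [ENNReal.ofReal_toReal hfin])

theorem volume_sub_image_le_mul_hausdorffMeasure (hf : LipschitzWith C f) (hmℓ : m < ℓ) {R : ℝ}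
    (hR : 0 ≤ R) (B : Set (EuclideanSpace ℝ (Fin ℓ))) :
    volume (B - f '' {x | ‖(x : EuclideanSpace ℝ (Fin m))‖ ≤ R}) ≤
      ENNReal.ofReal ((2 * R + 3) ^ m * (1 + C * √m) ^ ℓ) *
        volume (ball (0 : EuclideanSpace ℝ (Fin ℓ)) 1) * μH[((ℓ - m : ℕ) : ℝ)] B := by
  set F := f '' {x | ‖(x : EuclideanSpace ℝ (Fin m))‖ ≤ R}
  set K := ENNReal.ofReal ((2 * R + 3) ^ m * (1 + C * √m) ^ ℓ) *
    volume (ball (0 : EuclideanSpace ℝ (Fin ℓ)) 1)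
  have hK : K ≠ ∞ := ENNReal.mul_ne_top ENNReal.ofReal_ne_top measure_ball_lt_top.ne
  have hK₀ : K ≠ 0 := mul_ne_zero (ENNReal.ofReal_pos.2 (by positivity)).ne'
    (measure_ball_pos volume _ one_pos).ne'
  have hcover : ∀ t : ℕ → Set (EuclideanSpace ℝ (Fin ℓ)), B ⊆ ⋃ n, t n →
      (∀ n, ediam (t n) ≤ 1) →
      volume (B - F) ≤ K * ∑' n, ⨆ _ : (t n).Nonempty, ediam (t n) ^ ((ℓ - m : ℕ) : ℝ) := by
    intro t hBt ht
    calc volume (B - F) ≤ volume (⋃ n, t n - F) := by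
          rw [← iUnion_sub]; exact measure_mono (sub_subset_sub_right hBt)
      _ ≤ ∑' n, volume (t n - F) := measure_iUnion_le _
      _ ≤ ∑' n, K * ⨆ _ : (t n).Nonempty, ediam (t n) ^ ((ℓ - m : ℕ) : ℝ) := by
          refine ENNReal.tsum_le_tsum fun n => ?_
          rcases (t n).eq_empty_or_nonempty with h | h
          · simp [h]
          rw [iSup_pos h, ENNReal.rpow_natCast]
          exact hf.volume_sub_image_le_ediam_pow hmℓ hR (ht n)
      _ = K * ∑' n, ⨆ _ : (t n).Nonempty, ediam (t n) ^ ((ℓ - m : ℕ) : ℝ) := ENNReal.tsum_mul_left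
  rw [Measure.hausdorffMeasure_apply]
  refine le_trans ?_ (mul_le_mul_right (le_iSup₂_of_le (1 : ℝ≥0∞) one_pos le_rfl) K)
  simp_rw [ENNReal.mul_iInf_of_ne hK₀ hK]
  exact le_iInf fun t => le_iInf fun hBt => le_iInf fun ht => hcover t hBt ht

theorem volume_sub_range_eq_zero (hf : LipschitzWith C f) (hmℓ : m ≤ ℓ)
    {B : Set (EuclideanSpace ℝ (Fin ℓ))} (hB : μH[((ℓ - m : ℕ) : ℝ)] B = 0) :
    volume (B - range f) = 0 := by
  rcases hmℓ.lt_or_eq with hmℓ | rfl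
  · have hrange : range f = ⋃ R : ℕ, f '' {x | ‖(x : EuclideanSpace ℝ (Fin m))‖ ≤ R} := by
      simp only [← image_iUnion, iUnion_ofPred, exists_nat_ge, ofPred_true, image_univ]
    rw [hrange, sub_iUnion]
    refine measure_iUnion_null fun R => nonpos_iff_eq_zero.1 ?_
    simpa [hB] using hf.volume_sub_image_le_mul_hausdorffMeasure hmℓ R.cast_nonneg B
  · rw [Nat.sub_self, Nat.cast_zero] at hB
    obtain rfl : B = ∅ := by
      rw [← not_nonempty_iff_eq_empty]
      intro hne
      simpa [hB] using Measure.one_le_hausdorffMeasure_zero_of_nonempty hne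
    simp

end LipschitzWith

theorem ae_ae_smul_notMem {E : Type*} [NormedAddCommGroup E] [NormedSpace ℝ E]
    [MeasurableSpace E] [BorelSpace E] [FiniteDimensional ℝ E] (μ : Measure E)
    [μ.IsAddHaarMeasure] {N : Set E} (hN : μ N = 0) :
    ∀ᵐ v ∂μ, ∀ᵐ t : ℝ, t • v ∉ N := by
  obtain ⟨N', hNN', hN'm, hN'⟩ := exists_measurable_superset_of_null hN
  have hm : MeasurableSet {p : ℝ × E | p.1 • p.2 ∉ N'} :=
    (hN'm.preimage (measurable_fst.smul measurable_snd)).compl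
  have h : ∀ᵐ t : ℝ, ∀ᵐ v ∂μ, t • v ∉ N' := by
    filter_upwards [Measure.ae_ne volume 0] with t ht
    rw [ae_iff]
    simp [← preimage_ofPred_eq, Measure.addHaar_preimage_smul μ ht, hN']
  filter_upwards [(Measure.ae_ae_comm hm).1 h] with v hv
  filter_upwards [hv] with t ht using fun htN => ht (hNN' htN)

/-- **Instantaneous affine displaceability of small sets.**
If `A ⊆ ℝ^ℓ` is countably `m`-rectifiable and `B ⊆ ℝ^ℓ` is `(ℓ-m)`-negligible, then there
is a vector `v₀` such that the set of times `t` for which `(A + t • v₀) ∩ B ≠ ∅` has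
one-dimensional Lebesgue measure zero. -/
theorem affine_displaceability (ℓ m : ℕ) (hm : m ≤ ℓ)
    (A B : Set (EuclideanSpace ℝ (Fin ℓ)))
    (hA : CountablyRectifiable m A)
    (hB : μH[((ℓ - m : ℕ) : ℝ)] B = 0) :
    ∃ v₀ : EuclideanSpace ℝ (Fin ℓ),
      volume {t : ℝ | (((fun a => a + t • v₀) '' A) ∩ B).Nonempty} = 0 := by
  obtain ⟨S, f, C, hf, rfl⟩ := hA
  have hnull : volume (B - ⋃ i, range (f i)) = 0 := by
    rw [sub_iUnion]
    exact measure_iUnion_null fun i => (hf i).volume_sub_range_eq_zero hm hB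
  obtain ⟨v₀, hv₀⟩ := (ae_ae_smul_notMem volume hnull).exists
  refine ⟨v₀, measure_mono_null ?_ (ae_iff.1 hv₀)⟩
  rintro t ⟨_, ⟨a, ha, rfl⟩, hb⟩
  simpa using ⟨_, hb, a, ha, add_sub_cancel_left a (t • v₀)⟩
end

section
/- Let n ∈ ℕ and let A ⊆ ℝ^{2n} be countably n-rectifiable and n-negligible. Then there exists a vector v₀ ∈ ℝ^{2n} such that for Lebesgue-almost every t ∈ ℝ one has (A + t·v₀) ∩ A = ∅. -/
open Set MeasureTheory

open Measure Module Function
open scoped NNReal ENNReal Pointwise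

/-!
Write `A` as the countable union of the images `F i '' S i` of globally Lipschitz maps
`F i : ℝⁿ → ℝ²ⁿ`. The difference set `F i '' S i - F j '' S j` is the image of `S i × S j` under
the Lipschitz map `(x, y) ↦ F i x - F j y` between spaces of the same dimension `2n`, and it is
Lebesgue-null: points where `F i` is not differentiable form a null set (Rademacher); where
`d(F i)` is injective, `F i` is locally anti-Lipschitz, so `Hⁿ(F i '' S i) = 0` makes these
points null as well; and where `d(F i)` is not injective the Jacobian of the difference map
vanishes, so Sard's lemma applies. Since `A - A` is null, Fubini for `(v, t) ↦ t • v` shows that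
for almost every `v₀` the times `t` with `t • v₀ ∈ A - A` form a null set.
-/

theorem LipschitzWith.exists_lipschitzWith_image_eq_range {α E : Type*} [PseudoMetricSpace α]
    [NormedAddCommGroup E] [NormedSpace ℝ E] [FiniteDimensional ℝ E] {s : Set α} {f : s → E}
    {K : ℝ≥0} (hf : LipschitzWith K f) :
    ∃ (g : α → E) (K' : ℝ≥0), LipschitzWith K' g ∧ g '' s = range f := by
  classical
  set f' : α → E := fun x => if h : x ∈ s then f ⟨x, h⟩ else 0
  have hrestrict : s.domRestrict f' = f := funext fun x => dif_pos x.2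
  obtain ⟨g, hg, hfg⟩ :=
    (lipschitzOnWith_iff_restrict.mpr (hrestrict ▸ hf)).extend_finite_dimension
  exact ⟨g, _, hg, by rw [← hrestrict, ← hfg.image_eq, range_domRestrict]⟩

theorem AntilipschitzWith.le_hausdorffMeasure_image_of_domRestrict {X Y : Type*} [EMetricSpace X]
    [MeasurableSpace X] [BorelSpace X] [EMetricSpace Y] [MeasurableSpace Y] [BorelSpace Y]
    {f : X → Y} {s : Set X} {K : ℝ≥0} (hf : AntilipschitzWith K (s.domRestrict f)) {d : ℝ}
    (hd : 0 ≤ d) : μH[d] s ≤ (K : ℝ≥0∞) ^ d * μH[d] (f '' s) := by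
  have := hf.le_hausdorffMeasure_image hd univ
  rwa [← isometry_subtype_coe.hausdorffMeasure_image (Or.inl hd), image_univ, image_univ,
    Subtype.range_coe, range_domRestrict] at this

theorem ApproximatesLinearOn.antilipschitzWith_domRestrict {𝕜 E F : Type*}
    [NontriviallyNormedField 𝕜] [NormedAddCommGroup E] [NormedSpace 𝕜 E] [NormedAddCommGroup F]
    [NormedSpace 𝕜 F] {f : E → F} {A : E →L[𝕜] F} {s : Set E} {c N : ℝ≥0}
    (hf : ApproximatesLinearOn f A s c) (hA : AntilipschitzWith N A) (hc : c < N⁻¹) :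
    AntilipschitzWith (N⁻¹ - c)⁻¹ (s.domRestrict f) := by
  convert! (hA.domRestrict s).add_lipschitzWith hf.lipschitz_sub hc
  exact (add_sub_cancel _ _).symm

theorem hausdorffMeasure_eq_zero_of_hasFDerivWithinAt_of_injective {E F : Type*}
    [NormedAddCommGroup E] [NormedSpace ℝ E] [FiniteDimensional ℝ E] [MeasurableSpace E]
    [BorelSpace E] [NormedAddCommGroup F] [NormedSpace ℝ F] [SecondCountableTopology F]
    [MeasurableSpace F] [BorelSpace F] {f : E → F} {f' : E → E →L[ℝ] F} {s : Set E}
    (hf' : ∀ x ∈ s, HasFDerivWithinAt f (f' x) s x) (hinj : ∀ x ∈ s, Injective (f' x))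
    {d : ℝ} (hd : 0 ≤ d) (hs : μH[d] (f '' s) = 0) : μH[d] s = 0 := by
  classical
  rcases s.eq_empty_or_nonempty with rfl | hne
  · exact measure_empty
  let N : (E →L[ℝ] F) → ℝ≥0 := fun A =>
    if h : ∃ K > 0, AntilipschitzWith K A then h.choose else 1
  have hN_pos : ∀ A, 0 < N A := fun A => by
    by_cases h : ∃ K > 0, AntilipschitzWith K A
    · simpa [N, h] using h.choose_spec.1
    · simp [N, h]
  have hN : ∀ A : E →L[ℝ] F, Injective A → AntilipschitzWith (N A) A := fun A hA => by
    have h : ∃ K > 0, AntilipschitzWith K A := (A : E →ₗ[ℝ] F).injective_iff_antilipschitz.1 hA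
    simpa only [N, dif_pos h] using h.choose_spec.2
  -- on each piece, `f - A n` is Lipschitz with constant `(N (A n))⁻¹ / 2`, too small to
  -- destroy the antilipschitz bound of `A n`
  obtain ⟨t, A, -, -, hst, hft, hAf'⟩ := exists_partition_approximatesLinearOn_of_hasFDerivWithinAt
    f s f' hf' (fun A => (N A)⁻¹ / 2) fun A => by simp [(hN_pos A).ne']
  have hpiece : ∀ n, μH[d] (s ∩ t n) = 0 := fun n => by
    obtain ⟨y, hy, hAy⟩ := hAf' hne n
    have hanti := (hft n).antilipschitzWith_domRestrict (hN _ (hAy ▸ hinj y hy))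
      (half_lt_self (inv_pos.2 (hN_pos _)))
    refine le_zero_iff.1 ((hanti.le_hausdorffMeasure_image_of_domRestrict hd).trans ?_)
    rw [measure_mono_null (image_mono inter_subset_left) hs, mul_zero]
  refine measure_mono_null (fun x hx => ?_) (measure_iUnion_null hpiece)
  obtain ⟨n, hn⟩ := mem_iUnion.1 (hst hx)
  exact mem_iUnion.2 ⟨n, hx, hn⟩

section FiniteDimensional

variable {E F : Type*} [NormedAddCommGroup E] [NormedSpace ℝ E] [FiniteDimensional ℝ E]
  [MeasurableSpace E] [BorelSpace E] [NormedAddCommGroup F] [NormedSpace ℝ F]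
  [FiniteDimensional ℝ F] [MeasurableSpace F] [BorelSpace F]

theorem LipschitzWith.addHaar_image_eq_zero_of_finrank_le {K : ℝ≥0} {f : E → F}
    (hf : LipschitzWith K f) (hEF : finrank ℝ E ≤ finrank ℝ F) (μ : Measure E) (ν : Measure F)
    [μ.IsAddHaarMeasure] [ν.IsAddHaarMeasure] {s : Set E} (hs : μ s = 0) : ν (f '' s) = 0 := by
  have := isAddHaarMeasure_hausdorffMeasure (E := E)
  have := isAddHaarMeasure_hausdorffMeasure (E := F)
  have hsE : μH[finrank ℝ E] s = 0 := absolutelyContinuous_isAddHaarMeasure _ μ hs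
  have hsF : μH[finrank ℝ F] s = 0 :=
    le_zero_iff.1 (hsE ▸ hausdorffMeasure_mono (by exact_mod_cast hEF) s)
  have hfs : μH[finrank ℝ F] (f '' s) = 0 :=
    le_zero_iff.1 ((hf.hausdorffMeasure_image_le (by positivity) s).trans (by simp [hsF]))
  exact absolutelyContinuous_isAddHaarMeasure ν _ hfs

theorem addHaar_image_eq_zero_of_hasFDerivWithinAt_of_not_injective
    (hEF : finrank ℝ E = finrank ℝ F) (μ : Measure F) [μ.IsAddHaarMeasure] {f : E → F}
    {f' : E → E →L[ℝ] F} {s : Set E} (hf' : ∀ x ∈ s, HasFDerivWithinAt f (f' x) s x)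
    (hinj : ∀ x ∈ s, ¬Injective (f' x)) : μ (f '' s) = 0 := by
  let ψ : F ≃L[ℝ] E := ContinuousLinearEquiv.ofFinrankEq hEF.symm
  have hdet : ∀ x ∈ s, ((ψ : F →L[ℝ] E).comp (f' x)).det = 0 := fun x hx => by
    obtain ⟨a, b, hab, hne⟩ := not_injective_iff.1 (hinj x hx)
    refine LinearMap.det_eq_zero_iff_ker_ne_bot.2
      ((Submodule.ne_bot_iff _).2 ⟨a - b, ?_, sub_ne_zero.2 hne⟩)
    simp [hab]
  have hψf : addHaar ((ψ ∘ f) '' s) = 0 := addHaar_image_eq_zero_of_det_fderivWithin_eq_zero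
    addHaar (fun x hx => (ψ : F →L[ℝ] E).hasFDerivAt.comp_hasFDerivWithinAt x (hf' x hx)) hdet
  have hfs : f '' s = ψ.symm '' ((ψ ∘ f) '' s) := by
    rw [image_image]; simp
  rw [hfs]
  exact ψ.symm.lipschitz.addHaar_image_eq_zero_of_finrank_le hEF.le addHaar μ hψf

end FiniteDimensional

section DifferenceSet

variable {E E' V : Type*} [NormedAddCommGroup E] [NormedSpace ℝ E] [FiniteDimensional ℝ E]
  [MeasurableSpace E] [BorelSpace E] [NormedAddCommGroup E'] [NormedSpace ℝ E']
  [FiniteDimensional ℝ E'] [MeasurableSpace E'] [BorelSpace E'] [NormedAddCommGroup V]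
  [NormedSpace ℝ V] [FiniteDimensional ℝ V] [MeasurableSpace V] [BorelSpace V]

theorem addHaar_image_sub_image_eq_zero (hdim : finrank ℝ E + finrank ℝ E' = finrank ℝ V)
    (μ : Measure V) [μ.IsAddHaarMeasure] {f : E → V} {g : E' → V} {Kf Kg : ℝ≥0}
    (hf : LipschitzWith Kf f) (hg : LipschitzWith Kg g) {s : Set E}
    (hs : μH[finrank ℝ E] (f '' s) = 0) (t : Set E') : μ (f '' s - g '' t) = 0 := by
  let h : E × E' → V := fun p => f p.1 - g p.2
  have hh : LipschitzWith _ h :=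
    (hf.comp LipschitzWith.prod_fst).sub (hg.comp LipschitzWith.prod_snd)
  have hdim' : finrank ℝ (E × E') = finrank ℝ V := by rw [finrank_prod, hdim]
  have hnull : ∀ u : Set (E × E'), (addHaar.prod addHaar) u = 0 → μ (h '' u) = 0 :=
    fun u hu => hh.addHaar_image_eq_zero_of_finrank_le hdim'.le _ μ hu
  let Z := {x | x ∈ s ∧ DifferentiableAt ℝ f x ∧ Injective (fderiv ℝ f x)}
  have hZ : addHaar Z = 0 := by
    have := isAddHaarMeasure_hausdorffMeasure (E := E)
    refine absolutelyContinuous_isAddHaarMeasure _ μH[finrank ℝ E] ?_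
    exact hausdorffMeasure_eq_zero_of_hasFDerivWithinAt_of_injective
      (fun x hx => hx.2.1.hasFDerivAt.hasFDerivWithinAt) (fun x hx => hx.2.2) (by positivity)
      (measure_mono_null (image_mono fun x hx => hx.1) hs)
  let B := {p : E × E' | DifferentiableAt ℝ f p.1 ∧ DifferentiableAt ℝ g p.2 ∧
    ¬Injective (fderiv ℝ f p.1)}
  have hB : μ (h '' B) = 0 := by
    refine addHaar_image_eq_zero_of_hasFDerivWithinAt_of_not_injective hdim' μ
      (f' := fun p => (fderiv ℝ f p.1).comp (.fst ℝ E E') - (fderiv ℝ g p.2).comp (.snd ℝ E E'))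
      (fun p hp => ((hp.1.hasFDerivAt.comp p hasFDerivAt_fst).sub
        (hp.2.1.hasFDerivAt.comp p hasFDerivAt_snd)).hasFDerivWithinAt) fun p hp hinj => ?_
    refine hp.2.2 fun a b hab => congrArg Prod.fst (@hinj (a, 0) (b, 0) ?_)
    simp [hab]
  have hcover : s ×ˢ t ⊆ Z ×ˢ univ ∪ {x | ¬DifferentiableAt ℝ f x} ×ˢ univ ∪
      univ ×ˢ {y | ¬DifferentiableAt ℝ g y} ∪ B := by
    rintro ⟨x, y⟩ ⟨hx, -⟩
    by_cases hfx : DifferentiableAt ℝ f x <;> by_cases hgy : DifferentiableAt ℝ g y <;>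
      by_cases hinj : Injective (fderiv ℝ f x) <;> simp_all [Z, B]
  have himage : f '' s - g '' t = h '' (s ×ˢ t) := by
    rw [← image2_sub, image2_image_left, image2_image_right, ← image_prod]
  rw [himage]
  refine measure_mono_null (image_mono hcover) ?_
  simp only [image_union]
  refine measure_union_null (measure_union_null (measure_union_null ?_ ?_) ?_) hB <;>
    refine hnull _ ?_ <;> rw [prod_prod]
  · rw [hZ, zero_mul]
  · rw [ae_iff.1 hf.ae_differentiableAt, zero_mul]
  · rw [ae_iff.1 hg.ae_differentiableAt, mul_zero]

end DifferenceSet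

theorem ae_volume_setOf_smul_mem_eq_zero {V : Type*} [NormedAddCommGroup V] [NormedSpace ℝ V]
    [FiniteDimensional ℝ V] [MeasurableSpace V] [BorelSpace V] (μ : Measure V)
    [μ.IsAddHaarMeasure] {D : Set V} (hD : μ D = 0) :
    ∀ᵐ v ∂μ, volume {t : ℝ | t • v ∈ D} = 0 := by
  set D' := toMeasurable μ D
  have hmeas : MeasurableSet {p : V × ℝ | p.2 • p.1 ∉ D'} :=
    ((measurableSet_toMeasurable μ D).preimage
      (continuous_snd.smul continuous_fst).measurable).compl
  have hslice : ∀ᵐ t : ℝ, ∀ᵐ v ∂μ, t • v ∉ D' := by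
    filter_upwards [Measure.ae_ne volume 0] with t ht
    have hpre : μ ((t • ·) ⁻¹' D') = 0 := by
      rw [addHaar_preimage_smul μ ht, measure_toMeasurable, hD, mul_zero]
    exact ae_iff.2 (measure_mono_null (fun v hv => not_not.1 hv) hpre)
  filter_upwards [(ae_ae_comm hmeas).2 hslice] with v hv
  exact measure_mono_null (fun t ht => not_not.2 (subset_toMeasurable μ D ht)) (ae_iff.1 hv)

/-- **Instantaneous Hamiltonian displaceability of a critically negligible set.**
If `A ⊆ ℝ^{2n}` is countably `n`-rectifiable and `n`-negligible, then there is a vector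
`v₀` such that for almost every `t ∈ ℝ` the translate `A + t • v₀` is disjoint from `A`. -/
theorem displaceability_critically_negligible (n : ℕ)
    (A : Set (EuclideanSpace ℝ (Fin (2 * n))))
    (hA : CountablyRectifiable n A)
    (hneg : μH[(n : ℝ)] A = 0) :
    ∃ v₀ : EuclideanSpace ℝ (Fin (2 * n)),
      volume {t : ℝ | ∃ a ∈ A, a + t • v₀ ∈ A} = 0 := by
  obtain ⟨S, f, C, hf, rfl⟩ := hA
  choose F K hF hFS using fun i => (hf i).exists_lipschitzWith_image_eq_range
  have hnull : ∀ i, μH[finrank ℝ (EuclideanSpace ℝ (Fin n))] (F i '' S i) = 0 := fun i => by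
    rw [finrank_euclideanSpace_fin, hFS]
    exact measure_mono_null (subset_iUnion (fun i => range (f i)) i) hneg
  have hdiff : volume ((⋃ i, range (f i)) - ⋃ i, range (f i)) = 0 := by
    simp only [iUnion_sub, sub_iUnion, ← hFS]
    exact measure_iUnion_null fun i => measure_iUnion_null fun j =>
      addHaar_image_sub_image_eq_zero (by simp [two_mul]) volume (hF j) (hF i) (hnull j) _
  obtain ⟨v₀, hv₀⟩ := (ae_volume_setOf_smul_mem_eq_zero volume hdiff).exists
  refine ⟨v₀, measure_mono_null ?_ hv₀⟩
  rintro t ⟨a, ha, hat⟩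
  exact ⟨a + t • v₀, hat, a, ha, add_sub_cancel_left a _⟩
end

section
/- Let X and Y be topological spaces with Y Hausdorff, let K ⊆ X be a compact subset, and let f : X → Y be a continuous map that is locally injective (every point of X has a neighbourhood on which f is injective) and whose restriction to K is injective. Then there exists an open neighbourhood U of K in X such that the restriction of f to U is injective. -/
open Set

/-- **Injectivity of the restriction of a locally injective continuous map that is
injective on a compact set.** If `Y` is Hausdorff, `K ⊆ X` is compact, and `f : X → Y`
is continuous, locally injective, and injective on `K`, then `f` is injective on some
open neighbourhood `U` of `K`. -/
theorem locally_injective_injOn_nhd_of_compact {X Y : Type*}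
    [TopologicalSpace X] [TopologicalSpace Y] [T2Space Y]
    (K : Set X) (hK : IsCompact K) (f : X → Y) (hf : Continuous f)
    (hloc : ∀ x : X, ∃ V, IsOpen V ∧ x ∈ V ∧ Set.InjOn f V)
    (hinj : Set.InjOn f K) :
    ∃ U : Set X, IsOpen U ∧ K ⊆ U ∧ Set.InjOn f U := by
  -- The collection of "good" open rectangles
  set G : Set (X × X) :=
    ⋃₀ {s | ∃ A B : Set X, IsOpen A ∧ IsOpen B ∧
      (∀ x ∈ A, ∀ y ∈ B, f x = f y → x = y) ∧ s = A ×ˢ B} with hG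
  have hGopen : IsOpen G := by
    apply isOpen_sUnion
    rintro s ⟨A, B, hA, hB, -, rfl⟩
    exact hA.prod hB
  have hGprop : ∀ p ∈ G, f p.1 = f p.2 → p.1 = p.2 := by
    rintro p ⟨s, ⟨A, B, hA, hB, hprop, rfl⟩, hp⟩ hfp
    exact hprop p.1 hp.1 p.2 hp.2 hfp
  have hKK : K ×ˢ K ⊆ G := by
    rintro ⟨a, b⟩ ⟨ha, hb⟩
    by_cases hab : a = b
    · obtain ⟨V, hV, haV, hVi⟩ := hloc a
      refine ⟨V ×ˢ V, ⟨V, V, hV, hV, fun x hx y hy h => hVi hx hy h, rfl⟩, haV, hab ▸ haV⟩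
    · have hfab : f a ≠ f b := fun h => hab (hinj ha hb h)
      obtain ⟨U1, U2, hU1, hU2, hfa, hfb, hdisj⟩ := t2_separation hfab
      refine ⟨(f ⁻¹' U1) ×ˢ (f ⁻¹' U2),
        ⟨f ⁻¹' U1, f ⁻¹' U2, hU1.preimage hf, hU2.preimage hf, ?_, rfl⟩, hfa, hfb⟩
      intro x hx y hy h
      exact absurd (h ▸ hx) (fun hxy => hdisj.le_bot ⟨hxy, hy⟩)
  have hGmem : G ∈ nhdsSet (K ×ˢ K) := hGopen.mem_nhdsSet.2 hKK
  rw [hK.nhdsSet_prod_eq hK, Filter.mem_prod_iff] at hGmem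
  obtain ⟨S, hS, T, hT, hST⟩ := hGmem
  refine ⟨interior (S ∩ T), isOpen_interior, ?_, ?_⟩
  · rw [subset_interior_iff_mem_nhdsSet]
    exact Filter.inter_mem hS hT
  · intro x hx y hy h
    have hx' := interior_subset hx
    have hy' := interior_subset hy
    exact hGprop (x, y) (hST ⟨hx'.1, hy'.2⟩) h
end

section
/- Let δ ∈ (0,1) and let Q ⊆ ℝ² be a nonempty open rectangle of area at most 2 − 2δ. Then there exists a symplectic embedding of Q into V_δ := ((0,1) × (−1,1)) \ ([δ,1) × [0,δ]): a smooth injective map θ : Q → V_δ with det Dθ(x) = 1 for every x ∈ Q. -/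
open Set

/-- The slit rectangle `V_δ := ((0,1) × (−1,1)) \ ([δ,1) × [0,δ]) ⊆ ℝ²`. -/
def Vslit (δ : ℝ) : Set (ℝ × ℝ) :=
  (Ioo (0 : ℝ) 1 ×ˢ Ioo (-1 : ℝ) 1) \ (Ico δ 1 ×ˢ Icc 0 δ)

/-- The standard symplectic (area) form on `ℝ²`. -/
def symp2 (u v : ℝ × ℝ) : ℝ := u.1 * v.2 - u.2 * v.1

noncomputable section SlitAux

open Real

/-- auxiliary scale -/
def slE (δ : ℝ) : ℝ := δ^2/202

def amE (δ t : ℝ) : ℝ := (1+(t/slE δ)^2)/((1+(t/slE δ)^2)+101/δ)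

def bmE (δ t : ℝ) : ℝ := t + δ/2 * Real.arctan (t/slE δ) + δ/2

def bm'E (δ t : ℝ) : ℝ := 1 + δ/2 * (1/(1+(t/slE δ)^2) * (1/slE δ))

lemma slE_pos {δ : ℝ} (hδ : 0 < δ) : 0 < slE δ := by unfold slE; positivity

lemma amE_pos {δ : ℝ} (hδ : 0 < δ) (t : ℝ) : 0 < amE δ t := by unfold amE; positivity

lemma amE_lt_one {δ : ℝ} (hδ : 0 < δ) (t : ℝ) : amE δ t < 1 := by
  unfold amE
  rw [div_lt_one (by positivity)]
  have : 0 < 101/δ := by positivity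
  linarith

lemma hasDerivAt_bmE {δ : ℝ} (hδ : 0 < δ) (t : ℝ) :
    HasDerivAt (bmE δ) (bm'E δ t) t := by
  have hs := slE_pos hδ
  have h1 : HasDerivAt (fun x : ℝ => x / slE δ) (1 / slE δ) t := by
    simpa using (hasDerivAt_id t).div_const (slE δ)
  have h2 : HasDerivAt (fun x : ℝ => Real.arctan (x / slE δ))
      (1/(1+(t/slE δ)^2) * (1/slE δ)) t := by
    have := (Real.hasDerivAt_arctan (t/slE δ)).comp t h1; exact this
  have h3 := ((hasDerivAt_id t).add (h2.const_mul (δ/2))).add_const (δ/2)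
  exact h3

lemma amE_mul_bm'E {δ : ℝ} (hδ : 0 < δ) (t : ℝ) : amE δ t * bm'E δ t = 1 := by
  have hs := slE_pos hδ
  have hN : (0:ℝ) < 1 + (t/slE δ)^2 := by positivity
  have hkey : δ/2 * (1/slE δ) = 101/δ := by
    unfold slE; field_simp; ring
  have hD : (0:ℝ) < (1 + (t/slE δ)^2) + 101/δ := by positivity
  have h : bm'E δ t = ((1+(t/slE δ)^2) + 101/δ)/(1+(t/slE δ)^2) := by
    unfold bm'E slE
    have hδ' : δ ≠ 0 := hδ.ne'
    field_simp
    ring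
  unfold amE
  rw [h]
  field_simp

lemma bm'E_pos {δ : ℝ} (hδ : 0 < δ) (t : ℝ) : 0 < bm'E δ t := by
  have hs := slE_pos hδ
  have hN : (0:ℝ) < 1 + (t/slE δ)^2 := by positivity
  unfold bm'E
  positivity

lemma strictMono_bmE {δ : ℝ} (hδ : 0 < δ) : StrictMono (bmE δ) :=
  strictMono_of_deriv_pos fun t => by
    rw [(hasDerivAt_bmE hδ t).deriv]; exact bm'E_pos hδ t

lemma contDiff_amE {δ : ℝ} (hδ : 0 < δ) : ContDiff ℝ (⊤ : ℕ∞) (amE δ) := by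
  have hN : ContDiff ℝ (⊤ : ℕ∞) (fun t : ℝ => 1 + (t/slE δ)^2) :=
    contDiff_const.add ((contDiff_id.div_const (slE δ)).pow 2)
  exact hN.div (hN.add contDiff_const)
    (fun t => by have : (0:ℝ) < 1 + (t/slE δ)^2 := by positivity
                 have : (0:ℝ) < 101/δ := by positivity
                 intro h; nlinarith)

lemma contDiff_bmE {δ : ℝ} : ContDiff ℝ (⊤ : ℕ∞) (bmE δ) := by
  unfold bmE
  exact (contDiff_id.add (contDiff_const.mul
    (Real.contDiff_arctan.comp (contDiff_id.div_const (slE δ))))).add contDiff_const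

lemma one_lt_arctan_ten : (1:ℝ) < Real.arctan 10 := by
  have hc : (1:ℝ)/2 < Real.cos 1 := by
    nlinarith [Real.one_sub_sq_div_two_lt_cos (show (1:ℝ) ≠ 0 by norm_num)]
  have hsin := Real.sin_le_one 1
  have htan : Real.tan 1 < 10 := by
    rw [Real.tan_eq_sin_div_cos]
    rw [div_lt_iff₀ (by linarith)]
    nlinarith
  have h1pi : (1:ℝ) < π/2 := by nlinarith [Real.pi_gt_three]
  calc (1:ℝ) = Real.arctan (Real.tan 1) := (Real.arctan_tan (by linarith) h1pi).symm
    _ < Real.arctan 10 := Real.arctan_strictMono htan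


open Real in
set_option maxHeartbeats 2000000 in
/-- **Symplectic embedding of a rectangle into the slit rectangle `V_δ`.**
Every nonempty open rectangle `Q ⊆ ℝ²` of area at most `2 − 2δ` symplectically embeds
into `V_δ`: there is a smooth injective map `θ : Q → V_δ` whose derivative preserves the
standard symplectic form of `ℝ²` at every point of `Q`. -/
theorem rectangle_embeds_in_Vslit (δ : ℝ) (hδ : δ ∈ Ioo (0 : ℝ) 1)
    (a b c d : ℝ) (hab : a < b) (hcd : c < d)
    (Q : Set (ℝ × ℝ)) (hQ : Q = Ioo a b ×ˢ Ioo c d)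
    (harea : (b - a) * (d - c) ≤ 2 - 2 * δ) :
    ∃ θ : ℝ × ℝ → ℝ × ℝ,
      ContDiffOn ℝ (⊤ : ℕ∞) θ Q ∧
      Set.InjOn θ Q ∧
      Set.MapsTo θ Q (Vslit δ) ∧
      (∀ x ∈ Q, ∀ u v : ℝ × ℝ,
        symp2 (fderiv ℝ θ x u) (fderiv ℝ θ x v) = symp2 u v) := by
  obtain ⟨hδ0, hδ1⟩ := hδ
  have hw : (0:ℝ) < b - a := by linarith
  have hs := slE_pos hδ0
  set y1 : ℝ := -1 - δ/4 + π * δ / 4 with hy1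
  set Y : ℝ → ℝ := fun y => y1 + (b-a) * (y - c) with hYdef
  set θ : ℝ × ℝ → ℝ × ℝ :=
    fun p => ((p.1 - a)/(b-a) * amE δ (Y p.2), bmE δ (Y p.2)) with hθ
  clear_value y1 Y θ
  have cY : ContDiff ℝ (⊤ : ℕ∞) Y := by
    rw [hYdef]
    exact contDiff_const.add (contDiff_const.mul (contDiff_id.sub contDiff_const))
  refine ⟨θ, ?_, ?_, ?_, ?_⟩
  · -- smoothness
    have c1 : ContDiff ℝ (⊤ : ℕ∞) θ := by
      rw [hθ]
      exact ContDiff.prodMk (((contDiff_fst.sub contDiff_const).div_const _).mul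
        (((contDiff_amE hδ0).comp cY).comp contDiff_snd))
        ((contDiff_bmE.comp cY).comp contDiff_snd)
    exact c1.contDiffOn
  · -- injectivity
    intro p hp q hq he
    have hYmono : StrictMono Y := by
      rw [hYdef]
      intro x y hxy
      simp only
      nlinarith
    have hmono : StrictMono (fun y => bmE δ (Y y)) := (strictMono_bmE hδ0).comp hYmono
    rw [hθ] at he
    simp only [Prod.mk.injEq] at he
    obtain ⟨he1, he2⟩ := he
    have h2 : p.2 = q.2 := hmono.injective he2
    rw [h2] at he1
    have hα := amE_pos hδ0 (Y q.2)
    have h1' : (p.1 - a)/(b-a) = (q.1 - a)/(b-a) := mul_right_cancel₀ hα.ne' he1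
    have h1 : p.1 = q.1 := by
      have := congrArg (fun z => z * (b-a)) h1'
      simp only [div_mul_cancel₀ _ hw.ne'] at this
      linarith
    exact Prod.ext h1 h2
  · -- maps into Vslit
    intro p hp
    rw [hQ] at hp
    obtain ⟨⟨hx1, hx2⟩, hyc, hyd⟩ := hp
    have hXpos : 0 < (p.1 - a)/(b-a) := div_pos (by linarith) hw
    have hX1 : (p.1 - a)/(b-a) < 1 := (div_lt_one hw).2 (by linarith)
    show θ p ∈ Vslit δ
    rw [hθ]
    simp only [Vslit, mem_diff, mem_prod, mem_Ioo, mem_Ico, mem_Icc]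
    have ht1 : y1 < Y p.2 := by rw [hYdef]; simp only; nlinarith
    have ht2 : Y p.2 < y1 + (b-a)*(d-c) := by rw [hYdef]; simp only; nlinarith
    set t := Y p.2 with htdef
    clear_value t
    rw [hy1] at ht1 ht2
    have haU := Real.arctan_lt_pi_div_two (t/slE δ)
    have haL := Real.neg_pi_div_two_lt_arctan (t/slE δ)
    have hπU : π < 3.15 := Real.pi_lt_d2
    have hπL : 3 < π := Real.pi_gt_three
    have hαpos := amE_pos hδ0 t
    have hαlt := amE_lt_one hδ0 t
    refine ⟨⟨⟨?_, ?_⟩, ?_, ?_⟩, ?_⟩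
    · exact mul_pos hXpos hαpos
    · nlinarith
    · unfold bmE
      nlinarith
    · unfold bmE
      nlinarith
    · rintro ⟨⟨hu1, -⟩, hv0, hv1⟩
      rcases le_or_gt (10 * slE δ) t with h | h
      · have har : Real.arctan 10 ≤ Real.arctan (t/slE δ) :=
          Real.arctan_strictMono.monotone ((le_div_iff₀ hs).2 (by linarith))
        have h10 := one_lt_arctan_ten
        have hge : (1:ℝ) ≤ Real.arctan (t/slE δ) := le_trans h10.le har
        have hp2 : δ/2 ≤ δ/2 * Real.arctan (t/slE δ) := by nlinarith
        have hcon : δ < bmE δ t := by unfold bmE; linarith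
        linarith
      rcases le_or_gt t (-(10 * slE δ)) with h' | h'
      · have har : Real.arctan (t/slE δ) ≤ Real.arctan (-10) :=
          Real.arctan_strictMono.monotone ((div_le_iff₀ hs).2 (by linarith))
        rw [Real.arctan_neg] at har
        have h10 := one_lt_arctan_ten
        have hle : Real.arctan (t/slE δ) ≤ -1 := by linarith
        have hp2 : δ/2 * Real.arctan (t/slE δ) ≤ -(δ/2) := by nlinarith
        have hcon : bmE δ t < 0 := by unfold bmE; linarith
        linarith
      · have hq : (t/slE δ)^2 < 100 := by
          rw [div_pow, div_lt_iff₀ (by positivity)]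
          nlinarith
        have hcancel : δ * (101/δ) = 101 := by field_simp
        have hαδ : amE δ t < δ := by
          unfold amE
          rw [div_lt_iff₀ (by positivity)]
          nlinarith [hq, hcancel, hδ0, hδ1, sq_nonneg (t/slE δ)]
        have hlt : (p.1 - a)/(b-a) * amE δ t < amE δ t := by nlinarith
        linarith
  · -- symplectic
    intro p hp u v
    have hY' : ∀ y : ℝ, HasDerivAt Y (b-a) y := fun y => by
      rw [hYdef]
      simpa using (((hasDerivAt_id y).sub_const c).const_mul (b-a)).const_add y1
    have hBD : HasDerivAt (fun y => bmE δ (Y y)) (bm'E δ (Y p.2) * (b-a)) p.2 :=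
      (hasDerivAt_bmE hδ0 (Y p.2)).comp p.2 (hY' p.2)
    have hAdiff : DifferentiableAt ℝ (amE δ) (Y p.2) :=
      ((contDiff_amE hδ0).differentiable (by simp)).differentiableAt
    have hAD : HasDerivAt (fun y => amE δ (Y y)) (deriv (amE δ) (Y p.2) * (b-a)) p.2 :=
      (hAdiff.hasDerivAt).comp p.2 (hY' p.2)
    have hE : HasDerivAt (fun x : ℝ => (x - a)/(b-a)) (1/(b-a)) p.1 := by
      simpa using ((hasDerivAt_id p.1).sub_const a).div_const (b-a)
    have h1 : HasFDerivAt (fun q : ℝ × ℝ => (q.1 - a)/(b-a))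
        ((1/(b-a)) • ContinuousLinearMap.fst ℝ ℝ ℝ) p :=
      hE.comp_hasFDerivAt p hasFDerivAt_fst
    have h2 : HasFDerivAt (fun q : ℝ × ℝ => amE δ (Y q.2))
        ((deriv (amE δ) (Y p.2) * (b-a)) • ContinuousLinearMap.snd ℝ ℝ ℝ) p :=
      hAD.comp_hasFDerivAt p hasFDerivAt_snd
    have h3 : HasFDerivAt (fun q : ℝ × ℝ => bmE δ (Y q.2))
        ((bm'E δ (Y p.2) * (b-a)) • ContinuousLinearMap.snd ℝ ℝ ℝ) p :=
      hBD.comp_hasFDerivAt p hasFDerivAt_snd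
    have hθ' : HasFDerivAt θ
        ((((p.1 - a)/(b-a)) • ((deriv (amE δ) (Y p.2) * (b-a)) • ContinuousLinearMap.snd ℝ ℝ ℝ)
          + (amE δ (Y p.2)) • ((1/(b-a)) • ContinuousLinearMap.fst ℝ ℝ ℝ)).prod
          ((bm'E δ (Y p.2) * (b-a)) • ContinuousLinearMap.snd ℝ ℝ ℝ)) p := by
      rw [hθ]
      exact HasFDerivAt.prodMk (h1.mul h2) h3
    rw [hθ'.fderiv]
    simp only [ContinuousLinearMap.prod_apply, ContinuousLinearMap.add_apply,
      ContinuousLinearMap.coe_smul', Pi.smul_apply, ContinuousLinearMap.coe_fst',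
      ContinuousLinearMap.coe_snd', smul_eq_mul, symp2]
    have key := amE_mul_bm'E hδ0 (Y p.2)
    have hcan : (1/(b-a)) * (b-a) = 1 := by field_simp
    linear_combination (u.1*v.2 - u.2*v.1) * ((1/(b-a)) * (b-a)) * key
      + (u.1*v.2 - u.2*v.1) * hcan

end SlitAux
end

section
/- Let ℓ ∈ ℕ, ℓ ≥ 1, and let s ∈ (0, ℓ]. Set m := ⌈s⌉. Then there exists a subset A ⊆ ℝ^ℓ that is countably m-rectifiable, has Hausdorff dimension exactly s, and has vanishing s-dimensional Hausdorff measure. -/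
/-!
For `0 < a < 1/2` with `a ^ t = 1/2`, the points `(∑ₙ x i n * aⁿ)ᵢ` of `ℝ^m` with binary digits
`x i n` form a set of dimension `m * t`: at scale `n` it is covered by `2 ^ (m * n)` cylinders of
diameter `≲ aⁿ`, and since `a < 1/2` the first differing digit dominates the tail, so reading the
same digits in base `2` is a `t`-Hölder map from the set onto a cube. A countable union of such sets
whose dimensions increase to `s` has dimension `s` and `s`-dimensional measure zero. For
`m = ⌈s⌉ ≤ ℓ`, an isometric copy in `ℝ^ℓ` is the image of a subset of `ℝ^m` under one Lipschitz map.
-/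

open Set MeasureTheory

open Filter Topology
open scoped ENNReal NNReal

theorem abs_tsum_le_of_eq_zero_of_abs_le_pow {c : ℝ} (hc0 : 0 ≤ c) (hc1 : c < 1) {f : ℕ → ℝ}
    {n : ℕ} (hzero : ∀ k < n, f k = 0) (hf : ∀ k, |f k| ≤ c ^ k) :
    |∑' k, f k| ≤ c ^ n / (1 - c) := by
  have hs : Summable f := .of_norm_bounded (summable_geometric_of_lt_one hc0 hc1) hf
  rw [← hs.sum_add_tsum_nat_add n,
    Finset.sum_eq_zero fun k hk => hzero k (Finset.mem_range.1 hk), zero_add]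
  refine tsum_of_norm_bounded (f := fun k => f (k + n)) ?_ fun k => hf (k + n)
  simpa [pow_add, div_eq_inv_mul, mul_comm] using
    (hasSum_geometric_of_lt_one hc0 hc1).mul_right (c ^ n)

theorem one_sub_div_one_sub_pos {c : ℝ} (hc : c < 1 / 2) : 0 < 1 - c / (1 - c) := by
  rw [sub_pos, div_lt_one (by linarith)]
  linarith

noncomputable def digitSum (c : ℝ) (x : ℕ → Fin 2) : ℝ := ∑' n, ((x n : ℕ) : ℝ) * c ^ n

theorem abs_digit_sub_le (x y : Fin 2) : |((x : ℕ) : ℝ) - (y : ℕ)| ≤ 1 := by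
  fin_cases x <;> fin_cases y <;> norm_num

theorem abs_digit_sub_of_ne {x y : Fin 2} (h : x ≠ y) : |((x : ℕ) : ℝ) - (y : ℕ)| = 1 := by
  fin_cases x <;> fin_cases y <;> simp_all

theorem abs_digit_sub_mul_pow_le {c : ℝ} (hc0 : 0 ≤ c) (x y : ℕ → Fin 2) (k : ℕ) :
    |(((x k : ℕ) : ℝ) - (y k : ℕ)) * c ^ k| ≤ c ^ k := by
  rw [abs_mul, abs_of_nonneg (pow_nonneg hc0 k)]
  exact mul_le_of_le_one_left (pow_nonneg hc0 k) (abs_digit_sub_le _ _)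

section DigitSum

variable {c : ℝ} (hc0 : 0 ≤ c) (hc1 : c < 1)
include hc0 hc1

theorem summable_digit_mul_pow (x : ℕ → Fin 2) :
    Summable fun n => ((x n : ℕ) : ℝ) * c ^ n :=
  .of_nonneg_of_le (fun n => by positivity)
    (fun n => mul_le_of_le_one_left (pow_nonneg hc0 n)
      (by exact_mod_cast Nat.le_of_lt_succ (x n).isLt))
    (summable_geometric_of_lt_one hc0 hc1)

theorem digitSum_sub_digitSum (x y : ℕ → Fin 2) :
    digitSum c x - digitSum c y = ∑' n, (((x n : ℕ) : ℝ) - (y n : ℕ)) * c ^ n := by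
  simp_rw [digitSum, sub_mul]
  exact ((summable_digit_mul_pow hc0 hc1 x).tsum_sub (summable_digit_mul_pow hc0 hc1 y)).symm

theorem abs_digitSum_sub_le {x y : ℕ → Fin 2} {n : ℕ} (hxy : ∀ k < n, x k = y k) :
    |digitSum c x - digitSum c y| ≤ c ^ n / (1 - c) := by
  rw [digitSum_sub_digitSum hc0 hc1]
  exact abs_tsum_le_of_eq_zero_of_abs_le_pow hc0 hc1 (fun k hk => by simp [hxy k hk])
    (abs_digit_sub_mul_pow_le hc0 x y)

theorem le_abs_digitSum_sub {x y : ℕ → Fin 2} {n : ℕ} (hxy : ∀ k < n, x k = y k)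
    (hn : x n ≠ y n) : c ^ n * (1 - c / (1 - c)) ≤ |digitSum c x - digitSum c y| := by
  set f : ℕ → ℝ := fun k => (((x k : ℕ) : ℝ) - (y k : ℕ)) * c ^ k
  have hs : Summable f :=
    .of_norm_bounded (summable_geometric_of_lt_one hc0 hc1) (abs_digit_sub_mul_pow_le hc0 x y)
  have hfn : |f n| = c ^ n := by
    rw [abs_mul, abs_digit_sub_of_ne hn, one_mul, abs_of_nonneg (pow_nonneg hc0 n)]
  have htail : |∑' k, if k = n then 0 else f k| ≤ c ^ (n + 1) / (1 - c) := by
    refine abs_tsum_le_of_eq_zero_of_abs_le_pow hc0 hc1 (fun k hk => ?_) (fun k => ?_)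
    · rcases (Nat.lt_succ_iff.1 hk).lt_or_eq with hk | rfl
      · simp [f, hk.ne, hxy k hk]
      · simp
    · split_ifs
      · simp [pow_nonneg hc0]
      · exact abs_digit_sub_mul_pow_le hc0 x y k
  rw [digitSum_sub_digitSum hc0 hc1, hs.tsum_eq_add_tsum_ite n]
  calc c ^ n * (1 - c / (1 - c)) = |f n| - c ^ (n + 1) / (1 - c) := by rw [hfn]; ring
    _ ≤ |f n| - |∑' k, if k = n then 0 else f k| := by gcongr
    _ ≤ _ := abs_sub_abs_le_abs_add _ _

end DigitSum

theorem abs_ofDigits_sub_le_rpow {a t : ℝ} (ha0 : 0 < a) (ha : a < 1 / 2) (ht : 0 ≤ t)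
    (hat : a ^ t = 1 / 2) (x y : ℕ → Fin 2) :
    |Real.ofDigits x - Real.ofDigits y| ≤
      (1 - a / (1 - a))⁻¹ ^ t * |digitSum a x - digitSum a y| ^ t := by
  have hκ := one_sub_div_one_sub_pos ha
  rcases eq_or_ne x y with rfl | hxy
  · simp only [sub_self, abs_zero]
    positivity
  set n := PiNat.firstDiff x y
  have hagree : ∀ k < n, x k = y k := fun k hk => PiNat.apply_eq_of_lt_firstDiff hk
  have hsep := le_abs_digitSum_sub ha0.le (by linarith) hagree (PiNat.apply_firstDiff_ne hxy)
  calc |Real.ofDigits x - Real.ofDigits y| ≤ ((2 : ℝ) ^ n)⁻¹ := by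
        simpa using Real.abs_ofDigits_sub_ofDigits_le hagree
    _ = (a ^ n) ^ t := by rw [← Real.rpow_pow_comm ha0.le, hat, one_div, inv_pow]
    _ ≤ ((1 - a / (1 - a))⁻¹ * |digitSum a x - digitSum a y|) ^ t := by
        gcongr
        rwa [inv_mul_eq_div, le_div_iff₀ hκ]
    _ = _ := Real.mul_rpow (by positivity) (abs_nonneg _)

theorem dimH_range_le_of_dist_le_rpow {α X Y : Type*} [MetricSpace X] [MetricSpace Y]
    {f : α → X} {g : α → Y} {K r : ℝ≥0} (hr : 0 < r)
    (h : ∀ x y, dist (g x) (g y) ≤ K * dist (f x) (f y) ^ (r : ℝ)) :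
    dimH (range g) ≤ dimH (range f) / r := by
  rcases isEmpty_or_nonempty α with hα | hα
  · simp [range_eq_empty]
  classical
  have hfactor : ∀ x, g (Function.invFun f (f x)) = g x := fun x =>
    dist_le_zero.1 <| by
      simpa [Function.invFun_eq ⟨x, rfl⟩, hr.ne'] using h (Function.invFun f (f x)) x
  have hholder : HolderOnWith K r (g ∘ Function.invFun f) (range f) := by
    rintro _ ⟨x, rfl⟩ _ ⟨y, rfl⟩
    simp only [Function.comp_apply, hfactor, edist_dist]
    rw [← ENNReal.ofReal_coe_nnreal, ENNReal.ofReal_rpow_of_nonneg dist_nonneg r.coe_nonneg,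
      ← ENNReal.ofReal_mul K.coe_nonneg]
    exact ENNReal.ofReal_le_ofReal (h x y)
  have himage : (g ∘ Function.invFun f) '' range f = range g := by
    rw [← range_comp]
    exact congrArg range (funext hfactor)
  rw [← himage]
  exact hholder.dimH_image_le hr

theorem hausdorffMeasure_le_of_forall_cover {X : Type*} [EMetricSpace X] [MeasurableSpace X]
    [BorelSpace X] {ι : ℕ → Type*} [∀ n, Fintype (ι n)] {s : Set X} (U : ∀ n, ι n → Set X)
    {N : ℕ} {K r d : ℝ} (hK : 0 ≤ K) (hr0 : 0 ≤ r) (hr1 : r < 1) (hd : 0 ≤ d)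
    (hcover : ∀ n, s ⊆ ⋃ i, U n i)
    (hdiam : ∀ n i, Metric.ediam (U n i) ≤ ENNReal.ofReal (K * r ^ n))
    (hcard : ∀ n, Fintype.card (ι n) ≤ N ^ n) (hNr : N * r ^ d ≤ 1) :
    μH[d] s ≤ ENNReal.ofReal (K ^ d) := by
  have hr : Tendsto (fun n => ENNReal.ofReal (K * r ^ n)) atTop (𝓝 0) := by
    simpa using ENNReal.tendsto_ofReal
      ((tendsto_pow_atTop_nhds_zero_of_lt_one hr0 hr1).const_mul K)
  have hsum : ∀ n, ∑ i, Metric.ediam (U n i) ^ d ≤ ENNReal.ofReal (K ^ d) := fun n => calc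
    ∑ i, Metric.ediam (U n i) ^ d ≤ ∑ _i : ι n, ENNReal.ofReal (K * r ^ n) ^ d :=
        Finset.sum_le_sum fun i _ => ENNReal.rpow_le_rpow (hdiam n i) hd
    _ = ENNReal.ofReal (Fintype.card (ι n) * (K * r ^ n) ^ d) := by
        rw [Finset.sum_const, Finset.card_univ, nsmul_eq_mul,
          ENNReal.ofReal_rpow_of_nonneg (by positivity) hd,
          ENNReal.ofReal_mul (Nat.cast_nonneg _), ENNReal.ofReal_natCast]
    _ ≤ ENNReal.ofReal (K ^ d) := by
        refine ENNReal.ofReal_le_ofReal ?_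
        calc (Fintype.card (ι n) : ℝ) * (K * r ^ n) ^ d
            = Fintype.card (ι n) * (K ^ d * (r ^ d) ^ n) := by
              rw [Real.mul_rpow hK (by positivity), Real.rpow_pow_comm hr0]
          _ ≤ (N : ℝ) ^ n * (K ^ d * (r ^ d) ^ n) := by gcongr; exact_mod_cast hcard n
          _ = K ^ d * (N * r ^ d) ^ n := by ring
          _ ≤ K ^ d := mul_le_of_le_one_right (by positivity) (pow_le_one₀ (by positivity) hNr)
  calc μH[d] s ≤ liminf (fun n => ∑ i, Metric.ediam (U n i) ^ d) atTop :=
        Measure.hausdorffMeasure_le_liminf_sum d s _ hr U (.of_forall hdiam) (.of_forall hcover)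
    _ ≤ ENNReal.ofReal (K ^ d) := by
        simpa using liminf_le_liminf (f := atTop) (.of_forall hsum)

noncomputable def cantorMap (m : ℕ) (c : ℝ) (x : Fin m → ℕ → Fin 2) : Fin m → ℝ :=
  fun i => digitSum c (x i)

theorem ball_subset_range_ofDigits (m : ℕ) :
    Metric.ball (fun _ : Fin m => (1 / 2 : ℝ)) (1 / 2) ⊆
      range fun (x : Fin m → ℕ → Fin 2) i => Real.ofDigits (x i) := by
  intro u hu
  rw [Metric.mem_ball, dist_pi_lt_iff (by norm_num)] at hu
  have hdigits : ∀ i, ∃ d : ℕ → Fin 2, Real.ofDigits d = u i := fun i => by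
    obtain ⟨h0, h1⟩ := abs_lt.1 (Real.dist_eq (u i) _ ▸ hu i)
    obtain ⟨d, -, hd⟩ := Real.ofDigits_SurjOn one_lt_two ⟨by linarith, by linarith⟩
    exact ⟨d, hd⟩
  choose x hx using hdigits
  exact ⟨x, funext hx⟩

section CantorMap

variable {m : ℕ} {a t : ℝ}

theorem dist_ofDigits_le_rpow_dist_cantorMap (ha0 : 0 < a) (ha : a < 1 / 2) (ht : 0 ≤ t)
    (hat : a ^ t = 1 / 2) (x y : Fin m → ℕ → Fin 2) :
    dist (fun i => Real.ofDigits (x i)) (fun i => Real.ofDigits (y i)) ≤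
      (1 - a / (1 - a))⁻¹ ^ t * dist (cantorMap m a x) (cantorMap m a y) ^ t := by
  have hκ := one_sub_div_one_sub_pos ha
  refine (dist_pi_le_iff (by positivity)).2 fun i => ?_
  rw [Real.dist_eq]
  refine (abs_ofDigits_sub_le_rpow ha0 ha ht hat (x i) (y i)).trans ?_
  gcongr
  exact (Real.dist_eq _ _).symm.trans_le (dist_le_pi_dist (cantorMap m a x) (cantorMap m a y) i)

theorem le_dimH_range_cantorMap (ha0 : 0 < a) (ha : a < 1 / 2) (ht : 0 < t)
    (hat : a ^ t = 1 / 2) : ENNReal.ofReal (m * t) ≤ dimH (range (cantorMap m a)) := by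
  lift t to ℝ≥0 using ht.le
  have hκ := one_sub_div_one_sub_pos ha
  have hcube : (m : ℝ≥0∞) ≤ dimH (range fun (x : Fin m → ℕ → Fin 2) i => Real.ofDigits (x i)) :=
    (Real.dimH_ball_pi_fin _ (by norm_num)).symm.le.trans
      (dimH_mono (ball_subset_range_ofDigits m))
  have hholder := dimH_range_le_of_dist_le_rpow (K := ⟨_, by positivity⟩) (NNReal.coe_pos.1 ht)
    (dist_ofDigits_le_rpow_dist_cantorMap (m := m) ha0 ha ht.le hat)
  rw [ENNReal.le_div_iff_mul_le (.inl (by simpa using ht.ne')) (.inl ENNReal.coe_ne_top)]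
    at hholder
  rw [ENNReal.ofReal_mul (Nat.cast_nonneg m), ENNReal.ofReal_natCast, ENNReal.ofReal_coe_nnreal]
  exact (mul_le_mul_left hcube _).trans hholder

theorem dimH_range_cantorMap_le (ha0 : 0 < a) (ha1 : a < 1) (ht : 0 ≤ t)
    (hat : a ^ t = 1 / 2) : dimH (range (cantorMap m a)) ≤ ENNReal.ofReal (m * t) := by
  have hmeas := hausdorffMeasure_le_of_forall_cover (s := range (cantorMap m a))
    (fun n (w : Fin m → Fin n → Fin 2) => cantorMap m a '' {x | ∀ i (k : Fin n), x i k = w i k})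
    (N := 2 ^ m) (K := (1 - a)⁻¹) (r := a) (d := m * t)
    (inv_nonneg.2 (sub_nonneg.2 ha1.le)) ha0.le ha1 (by positivity) ?cover ?diam ?card ?count
  case cover =>
    rintro n _ ⟨x, rfl⟩
    exact mem_iUnion.2 ⟨fun i k => x i k, x, fun i k => rfl, rfl⟩
  case diam =>
    intro n w
    refine Metric.ediam_image_le_iff.2 fun x hx y hy => ?_
    rw [edist_dist, inv_mul_eq_div]
    refine ENNReal.ofReal_le_ofReal ((dist_pi_le_iff (by positivity)).2 fun i => ?_)
    exact (Real.dist_eq _ _).trans_le (abs_digitSum_sub_le ha0.le ha1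
      fun k hk => (hx i ⟨k, hk⟩).trans (hy i ⟨k, hk⟩).symm)
  case card =>
    intro n
    simp [← pow_mul, mul_comm]
  case count =>
    rw [mul_comm (m : ℝ) t, Real.rpow_mul_natCast ha0.le, hat]
    simp
  refine dimH_le_of_hausdorffMeasure_ne_top ?_
  rw [Real.coe_toNNReal _ (by positivity)]
  exact ne_top_of_le_ne_top ENNReal.ofReal_ne_top hmeas

theorem dimH_range_cantorMap (ha0 : 0 < a) (ha : a < 1 / 2) (ht : 0 < t) (hat : a ^ t = 1 / 2) :
    dimH (range (cantorMap m a)) = ENNReal.ofReal (m * t) :=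
  (dimH_range_cantorMap_le ha0 (by linarith) ht.le hat).antisymm
    (le_dimH_range_cantorMap ha0 ha ht hat)

end CantorMap

section FiniteDimensional

variable {E : Type*} [NormedAddCommGroup E] [NormedSpace ℝ E] [FiniteDimensional ℝ E]

theorem exists_dimH_eq_ofReal {d : ℝ} (hd0 : 0 < d) (hd : d < Module.finrank ℝ E) :
    ∃ C : Set E, dimH C = ENNReal.ofReal d := by
  set m := Module.finrank ℝ E
  have hm : (0 : ℝ) < m := hd0.trans hd
  have ht0 : 0 < d / m := div_pos hd0 hm
  have ha : (1 / 2 : ℝ) ^ (d / m)⁻¹ < 1 / 2 :=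
    Real.rpow_lt_self_of_lt_one (by norm_num) (by norm_num)
      ((one_lt_inv₀ ht0).2 ((div_lt_one hm).2 hd))
  have hat : ((1 / 2 : ℝ) ^ (d / m)⁻¹) ^ (d / m) = 1 / 2 := by
    rw [← Real.rpow_mul (by norm_num), inv_mul_cancel₀ ht0.ne', Real.rpow_one]
  let e : E ≃L[ℝ] (Fin m → ℝ) := .ofFinrankEq (Module.finrank_fin_fun ℝ).symm
  refine ⟨e.symm '' range (cantorMap m ((1 / 2) ^ (d / m)⁻¹)), ?_⟩
  rw [ContinuousLinearEquiv.dimH_image, dimH_range_cantorMap (by positivity) ha ht0 hat,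
    mul_div_cancel₀ _ hm.ne']

theorem exists_dimH_eq_ofReal_and_hausdorffMeasure_eq_zero [MeasurableSpace E] [BorelSpace E]
    {s : ℝ} (hs0 : 0 < s) (hs : s ≤ Module.finrank ℝ E) :
    ∃ A : Set E, dimH A = ENNReal.ofReal s ∧ μH[s] A = 0 := by
  obtain ⟨u, hu_mono, hu_mem, hu_lim⟩ := exists_seq_strictMono_tendsto' hs0
  choose C hC using fun n =>
    exists_dimH_eq_ofReal (E := E) (hu_mem n).1 ((hu_mem n).2.trans_le hs)
  refine ⟨⋃ n, C n, ?_, measure_iUnion_null fun n => ?_⟩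
  · rw [dimH_iUnion]
    simp_rw [hC]
    exact iSup_eq_of_tendsto (fun _ _ h => ENNReal.ofReal_le_ofReal (hu_mono.monotone h))
      (ENNReal.tendsto_ofReal hu_lim)
  · have hlt : dimH (C n) < s.toNNReal := by
      rw [hC]
      exact (ENNReal.ofReal_lt_ofReal_iff hs0).2 (hu_mem n).2
    simpa [Real.coe_toNNReal _ hs0.le] using hausdorffMeasure_of_dimH_lt hlt

end FiniteDimensional

theorem LipschitzWith.countablyRectifiable_image {m : ℕ} {X : Type*} [MetricSpace X]
    {f : EuclideanSpace ℝ (Fin m) → X} {K : ℝ≥0} (hf : LipschitzWith K f)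
    (A : Set (EuclideanSpace ℝ (Fin m))) : CountablyRectifiable m (f '' A) :=
  ⟨fun _ => A, fun _ => f ∘ (↑), fun _ => K,
    fun _ => by simpa using hf.comp (LipschitzWith.subtype_val A),
    by rw [iUnion_const, range_comp, Subtype.range_coe]⟩

theorem exists_isometry_euclideanSpace {m ℓ : ℕ} (h : m ≤ ℓ) :
    ∃ f : EuclideanSpace ℝ (Fin m) → EuclideanSpace ℝ (Fin ℓ), Isometry f := by
  classical
  let b := EuclideanSpace.basisFun (Fin m) ℝ
  let f := b.toBasis.constr ℝ fun i => EuclideanSpace.single (Fin.castLE h i) (1 : ℝ)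
  have hf : Orthonormal ℝ (f ∘ b.toBasis) := by
    have : f ∘ b.toBasis = (fun j => EuclideanSpace.single j (1 : ℝ)) ∘ Fin.castLE h :=
      funext (b.toBasis.constr_basis ℝ _)
    rw [this]
    exact EuclideanSpace.orthonormal_single.comp _ (Fin.castLE_injective h)
  have hb : Orthonormal ℝ b.toBasis := by rw [b.coe_toBasis]; exact b.orthonormal
  exact ⟨_, (f.isometryOfOrthonormal hb hf).isometry⟩

theorem exists_rectifiable_of_dimension_general (ℓ : ℕ) (s : ℝ)
    (hs : 0 < s) (hsl : s ≤ ℓ) :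
    ∃ A : Set (EuclideanSpace ℝ (Fin ℓ)),
      CountablyRectifiable ⌈s⌉₊ A ∧
      dimH A = ENNReal.ofReal s ∧
      μH[s] A = 0 := by
  obtain ⟨A, hdim, hnull⟩ :=
    exists_dimH_eq_ofReal_and_hausdorffMeasure_eq_zero (E := EuclideanSpace ℝ (Fin ⌈s⌉₊)) hs
      (by simpa using Nat.le_ceil s)
  obtain ⟨f, hf⟩ := exists_isometry_euclideanSpace (Nat.ceil_le.2 hsl)
  exact ⟨f '' A, hf.lipschitz.countablyRectifiable_image A, by rw [hf.dimH_image, hdim],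
    by rw [hf.hausdorffMeasure_image (.inl hs.le), hnull]⟩

/-- **Existence of a countably `⌈s⌉`-rectifiable subset of `ℝ^ℓ` of Hausdorff dimension
exactly `s` with vanishing `s`-dimensional Hausdorff measure**, for every `s ∈ (0, ℓ]`. -/
theorem exists_rectifiable_of_dimension (ℓ : ℕ) (hl : 1 ≤ ℓ) (s : ℝ)
    (hs : 0 < s) (hsl : s ≤ ℓ) :
    ∃ A : Set (EuclideanSpace ℝ (Fin ℓ)),
      CountablyRectifiable ⌈s⌉₊ A ∧
      dimH A = ENNReal.ofReal s ∧
      μH[s] A = 0 :=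
  exists_rectifiable_of_dimension_general ℓ s hs hsl
end
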